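/- arXiv:2307.02385 — 7 statements merged into one kernel-verified Lean document; each statement's English description precedes it below -/
import Mathlib

section
/- The operators T_i satisfy the braid relations: T_i T_{i+1} T_i = T_{i+1} T_i T_{i+1} for 1 <= i <= N-2, and T_i T_j = T_j T_i whenever |i - j| >= 2. -/
/- STATEMENT 1: The Demazure–Lusztig operators `T_i` satisfy the braid relations
   `T_i T_{i+1} T_i = T_{i+1} T_i T_{i+1}` for `1 ≤ i ≤ N-2`, and
   `T_i T_j = T_j T_i` whenever `|i - j| ≥ 2`. -/

open MvPolynomial

/-- The field automorphism of the fraction field of `F[x_1,…,x_N]` induced by a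
permutation of the variables (`K_σ`). -/
noncomputable def permK {F : Type*} [Field F] {σ : Type*} (e : Equiv.Perm σ) :
    FractionRing (MvPolynomial σ F) ≃+* FractionRing (MvPolynomial σ F) :=
  IsFractionRing.ringEquivOfRingEquiv (MvPolynomial.renameEquiv F e).toRingEquiv

/-- The Demazure–Lusztig operator built from the pair of variables `x_a, x_b`
(for `T_i`, take `a = i`, `b = i+1`):
`T f = t f + ((t x_a - x_b)/(x_a - x_b)) (K_{a,b} f - f)`. -/
noncomputable def DL {F : Type*} [Field F] {N : ℕ} (t : F) (a b : Fin N)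
    (f : FractionRing (MvPolynomial (Fin N) F)) : FractionRing (MvPolynomial (Fin N) F) :=
  algebraMap (MvPolynomial (Fin N) F) _ (C t) * f +
    ((algebraMap (MvPolynomial (Fin N) F) _ (C t) * algebraMap (MvPolynomial (Fin N) F) _ (X a)
      - algebraMap (MvPolynomial (Fin N) F) _ (X b)) /
     (algebraMap (MvPolynomial (Fin N) F) _ (X a) - algebraMap (MvPolynomial (Fin N) F) _ (X b))) *
    (permK (Equiv.swap a b) f - f)

/-- `T_i` acting on the (image in the fraction field of the) ring of polynomials,
for a natural-number index `i` with `i + 1 < N` (0-based; `T_i` uses `x_i, x_{i+1}`). -/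
noncomputable def DLi {F : Type*} [Field F] {N : ℕ} (t : F) (i : ℕ) (hi : i + 1 < N)
    (f : FractionRing (MvPolynomial (Fin N) F)) : FractionRing (MvPolynomial (Fin N) F) :=
  DL t ⟨i, Nat.lt_of_succ_lt hi⟩ ⟨i + 1, hi⟩ f

theorem permK_algebraMap {F : Type*} [Field F] {σ : Type*} (e : Equiv.Perm σ)
    (p : MvPolynomial σ F) :
    permK e (algebraMap (MvPolynomial σ F) (FractionRing (MvPolynomial σ F)) p) =
      algebraMap _ _ (rename e p) := by
  simp [permK, IsLocalization.ringEquivOfRingEquiv_eq]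

theorem permK_permK {F : Type*} [Field F] {σ : Type*} (e₁ e₂ : Equiv.Perm σ)
    (f : FractionRing (MvPolynomial σ F)) :
    permK e₁ (permK e₂ f) = permK (e₁ * e₂) f := by
  have : (permK (F := F) e₁).toRingHom.comp (permK e₂).toRingHom = (permK (e₁ * e₂)).toRingHom := by
    apply IsLocalization.ringHom_ext (nonZeroDivisors (MvPolynomial σ F))
    apply RingHom.ext
    intro p
    simp only [RingHom.comp_apply, RingEquiv.toRingHom_eq_coe, RingEquiv.coe_toRingHom]
    rw [permK_algebraMap, permK_algebraMap, permK_algebraMap, rename_rename]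
    rfl
  exact congrFun (congrArg DFunLike.coe this) f

theorem permK_one {F : Type*} [Field F] {σ : Type*}
    (f : FractionRing (MvPolynomial σ F)) : permK (1 : Equiv.Perm σ) f = f := by
  have : (permK (F := F) (1 : Equiv.Perm σ)).toRingHom = RingHom.id _ := by
    apply IsLocalization.ringHom_ext (nonZeroDivisors (MvPolynomial σ F))
    apply RingHom.ext
    intro p
    simp only [RingHom.comp_apply, RingEquiv.toRingHom_eq_coe, RingEquiv.coe_toRingHom,
      RingHom.id_apply]
    rw [permK_algebraMap]
    simp [rename_rename]
  exact congrFun (congrArg DFunLike.coe this) f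

theorem permK_X {F : Type*} [Field F] {σ : Type*} (e : Equiv.Perm σ) (a : σ) :
    permK e (algebraMap (MvPolynomial σ F) (FractionRing (MvPolynomial σ F)) (X a)) =
      algebraMap (MvPolynomial σ F) _ (X (e a)) := by rw [permK_algebraMap, rename_X]

theorem permK_C {F : Type*} [Field F] {σ : Type*} (e : Equiv.Perm σ) (t : F) :
    permK e (algebraMap (MvPolynomial σ F) (FractionRing (MvPolynomial σ F)) (C t)) =
      algebraMap (MvPolynomial σ F) _ (C t) := by rw [permK_algebraMap, rename_C]

theorem X_sub_ne {F : Type*} [Field F] {σ : Type*} {a b : σ} (h : a ≠ b) :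
    (algebraMap (MvPolynomial σ F) (FractionRing (MvPolynomial σ F)) (X a))
      - algebraMap (MvPolynomial σ F) _ (X b) ≠ 0 := by
  rw [sub_ne_zero]
  intro hh
  exact h (X_injective (IsFractionRing.injective (MvPolynomial σ F)
    (FractionRing (MvPolynomial σ F)) hh))

theorem permK_swap_swap {F : Type*} [Field F] {σ : Type*} [DecidableEq σ] (x y : σ)
    (g : FractionRing (MvPolynomial σ F)) :
    permK (Equiv.swap x y) (permK (Equiv.swap x y) g) = g := by
  rw [permK_permK, Equiv.swap_mul_self, permK_one]

set_option maxHeartbeats 1000000 in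
set_option synthInstance.maxHeartbeats 200000 in
theorem DL_braid {F : Type*} [Field F] {N : ℕ} (t : F) (a b c : Fin N)
    (hab : a ≠ b) (hac : a ≠ c) (hbc : b ≠ c) (f : FractionRing (MvPolynomial (Fin N) F)) :
    DL t a b (DL t b c (DL t a b f)) = DL t b c (DL t a b (DL t b c f)) := by
  have hL : Equiv.swap a b * Equiv.swap b c * Equiv.swap a b = Equiv.swap a c := by
    rw [Equiv.swap_comm a b, Equiv.swap_comm b c,
      Equiv.swap_mul_swap_mul_swap (Ne.symm hbc) (Ne.symm hac)]
  have hR : Equiv.swap b c * Equiv.swap a b * Equiv.swap b c = Equiv.swap a c := by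
    rw [Equiv.swap_mul_swap_mul_swap hab hac, Equiv.swap_comm]
  set ι := algebraMap (MvPolynomial (Fin N) F) (FractionRing (MvPolynomial (Fin N) F)) with hι
  set u := ι (X a) with hu
  set v := ι (X b) with hv
  set w := ι (X c) with hw
  set τ := ι (C t) with hτ
  have h1u : permK (Equiv.swap a b) u = v := by rw [hu, hv, permK_X, Equiv.swap_apply_left]
  have h1v : permK (Equiv.swap a b) v = u := by rw [hu, hv, permK_X, Equiv.swap_apply_right]
  have h1w : permK (Equiv.swap a b) w = w := by
    rw [hw, permK_X, Equiv.swap_apply_of_ne_of_ne (Ne.symm hac) (Ne.symm hbc)]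
  have h1τ : permK (Equiv.swap a b) τ = τ := by rw [hτ]; exact permK_C _ _
  have h2u : permK (Equiv.swap b c) u = u := by
    rw [hu, permK_X, Equiv.swap_apply_of_ne_of_ne hab hac]
  have h2v : permK (Equiv.swap b c) v = w := by rw [hv, hw, permK_X, Equiv.swap_apply_left]
  have h2w : permK (Equiv.swap b c) w = v := by rw [hv, hw, permK_X, Equiv.swap_apply_right]
  have h2τ : permK (Equiv.swap b c) τ = τ := by rw [hτ]; exact permK_C _ _
  set g1 := permK (Equiv.swap a b) f with hg1
  set g2 := permK (Equiv.swap b c) f with hg2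
  set g3 := permK (Equiv.swap a b) g2 with hg3
  set g4 := permK (Equiv.swap b c) g1 with hg4
  set g5 := permK (Equiv.swap a b) g4 with hg5
  have e11 : permK (Equiv.swap a b) g1 = f := by rw [hg1, permK_swap_swap]
  have e22 : permK (Equiv.swap b c) g2 = f := by rw [hg2, permK_swap_swap]
  have e23 : permK (Equiv.swap b c) g3 = g5 := by
    rw [hg3, hg2, hg5, hg4, hg1, permK_permK, permK_permK, permK_permK, permK_permK,
      hL, hR]
  have huv : u - v ≠ 0 := X_sub_ne hab
  have hvu : v - u ≠ 0 := X_sub_ne (Ne.symm hab)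
  have hvw : v - w ≠ 0 := X_sub_ne hbc
  have hwv : w - v ≠ 0 := X_sub_ne (Ne.symm hbc)
  have huw : u - w ≠ 0 := X_sub_ne hac
  have hwu : w - u ≠ 0 := X_sub_ne (Ne.symm hac)
  simp only [DL, map_add, map_sub, map_mul, map_div₀, h1u, h1v, h1w, h1τ, h2u, h2v, h2w, h2τ,
    ← hg1, ← hg2, ← hg3, ← hg4, ← hg5, e11, e22, e23, ← hι, ← hu, ← hv, ← hw, ← hτ]
  set c1 := (τ * u - v) / (u - v) with hc1
  set c2 := (τ * v - w) / (v - w) with hc2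
  set c3 := (τ * u - w) / (u - w) with hc3
  have hd1 : (τ * v - u) / (v - u) = τ + 1 - c1 := by rw [hc1]; field_simp; ring
  have hd2 : (τ * w - v) / (w - v) = τ + 1 - c2 := by rw [hc2]; field_simp; ring
  rw [hd1, hd2]
  have hRel : c1 * c2 + (1 + τ) * c3 = c2 * c3 + c1 * c3 + τ := by
    rw [hc1, hc2, hc3]; field_simp; ring
  linear_combination ((c2 - c1) * f + c1 * g1 - c2 * g2) * hRel


set_option maxHeartbeats 1000000 in
set_option synthInstance.maxHeartbeats 200000 in
theorem DL_comm {F : Type*} [Field F] {N : ℕ} (t : F) (a b c d : Fin N)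
    (hac : a ≠ c) (had : a ≠ d) (hbc : b ≠ c) (hbd : b ≠ d)
    (f : FractionRing (MvPolynomial (Fin N) F)) :
    DL t a b (DL t c d f) = DL t c d (DL t a b f) := by
  have hcomm : Equiv.swap a b * Equiv.swap c d = Equiv.swap c d * Equiv.swap a b := by
    refine (Equiv.Perm.Disjoint.commute ?_).eq
    intro x
    by_cases h1 : x = a
    · right; rw [h1]; exact Equiv.swap_apply_of_ne_of_ne hac had
    by_cases h2 : x = b
    · right; rw [h2]; exact Equiv.swap_apply_of_ne_of_ne hbc hbd
    left; exact Equiv.swap_apply_of_ne_of_ne h1 h2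
  set ι := algebraMap (MvPolynomial (Fin N) F) (FractionRing (MvPolynomial (Fin N) F)) with hι
  set u := ι (X a) with hu
  set v := ι (X b) with hv
  set w := ι (X c) with hw
  set z := ι (X d) with hz
  set τ := ι (C t) with hτ
  have h1w : permK (Equiv.swap a b) w = w := by
    rw [hw, permK_X, Equiv.swap_apply_of_ne_of_ne (Ne.symm hac) (Ne.symm hbc)]
  have h1z : permK (Equiv.swap a b) z = z := by
    rw [hz, permK_X, Equiv.swap_apply_of_ne_of_ne (Ne.symm had) (Ne.symm hbd)]
  have h1τ : permK (Equiv.swap a b) τ = τ := by rw [hτ]; exact permK_C _ _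
  have h2u : permK (Equiv.swap c d) u = u := by
    rw [hu, permK_X, Equiv.swap_apply_of_ne_of_ne hac had]
  have h2v : permK (Equiv.swap c d) v = v := by
    rw [hv, permK_X, Equiv.swap_apply_of_ne_of_ne hbc hbd]
  have h2τ : permK (Equiv.swap c d) τ = τ := by rw [hτ]; exact permK_C _ _
  set g1 := permK (Equiv.swap a b) f with hg1
  set g2 := permK (Equiv.swap c d) f with hg2
  set g3 := permK (Equiv.swap c d) g1 with hg3
  have e12 : permK (Equiv.swap a b) g2 = g3 := by
    rw [hg2, hg3, hg1, permK_permK, permK_permK, hcomm]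
  simp only [DL, map_add, map_sub, map_mul, map_div₀, h1w, h1z, h1τ, h2u, h2v, h2τ,
    ← hg1, ← hg2, ← hg3, e12, ← hι, ← hu, ← hv, ← hw, ← hz, ← hτ]
  ring

/-- The braid relations for the `T_i`. -/
theorem DL_braid_relations {F : Type*} [Field F] (q t : F) (N : ℕ) :
    (∀ (i : ℕ) (hi : i + 2 < N) (p : MvPolynomial (Fin N) F),
      DLi t i (by omega) (DLi t (i+1) hi (DLi t i (by omega)
        (algebraMap (MvPolynomial (Fin N) F) (FractionRing (MvPolynomial (Fin N) F)) p)))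
      = DLi t (i+1) hi (DLi t i (by omega) (DLi t (i+1) hi
        (algebraMap (MvPolynomial (Fin N) F) (FractionRing (MvPolynomial (Fin N) F)) p))))
    ∧ (∀ (i j : ℕ) (hi : i + 1 < N) (hj : j + 1 < N), (i + 2 ≤ j ∨ j + 2 ≤ i) →
        ∀ p : MvPolynomial (Fin N) F,
      DLi t i hi (DLi t j hj
        (algebraMap (MvPolynomial (Fin N) F) (FractionRing (MvPolynomial (Fin N) F)) p))
      = DLi t j hj (DLi t i hi
        (algebraMap (MvPolynomial (Fin N) F) (FractionRing (MvPolynomial (Fin N) F)) p))) := by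
  constructor
  · intro i hi p
    exact DL_braid t ⟨i, by omega⟩ ⟨i + 1, by omega⟩ ⟨i + 2, by omega⟩
      ((by simp only [ne_eq, Fin.mk.injEq]; omega)) ((by simp only [ne_eq, Fin.mk.injEq]; omega))
      ((by simp only [ne_eq, Fin.mk.injEq]; omega)) _
  · intro i j hi hj hij p
    exact DL_comm t ⟨i, by omega⟩ ⟨i + 1, by omega⟩ ⟨j, by omega⟩ ⟨j + 1, by omega⟩
      ((by simp only [ne_eq, Fin.mk.injEq]; omega)) ((by simp only [ne_eq, Fin.mk.injEq]; omega))
      ((by simp only [ne_eq, Fin.mk.injEq]; omega)) ((by simp only [ne_eq, Fin.mk.injEq]; omega)) _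
end

section
/- The full t-symmetrization identity: the sum over all permutations sigma in S_N of T_sigma applied to the constant polynomial 1 equals the t-factorial [N]_t! = prod_{k=1}^{N} (1 + t + ... + t^{k-1}). Equivalently, sum over sigma in S_N of K_sigma applied to prod_{1<=i<j<=N} (x_i - t x_j)/(x_i - x_j) equals [N]_t!. -/
/- STATEMENT 4: The full t-symmetrization identity
   `𝒮ᵗ_N · 1 = ∑_{σ ∈ S_N} K_σ ∏_{1 ≤ i < j ≤ N} (x_i - t x_j)/(x_i - x_j) = [N]_t!`
   where `[N]_t! = ∏_{k=1}^N (1 + t + ⋯ + t^{k-1})`. -/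

open MvPolynomial Finset

/-- A product over the set of strictly increasing pairs, written as a double product. -/
lemma pair_prod_eq {M : Type*} [CommMonoid M] {m : ℕ} (f : Fin m × Fin m → M) :
    ∏ p ∈ (Finset.univ : Finset (Fin m × Fin m)).filter (fun p => p.1 < p.2), f p
      = ∏ i : Fin m, ∏ j ∈ Finset.Ioi i, f (i, j) := by
  rw [show (∏ i : Fin m, ∏ j ∈ Finset.Ioi i, f (i, j))
      = ∏ x ∈ (univ : Finset (Fin m)).sigma (fun i => Finset.Ioi i), f (x.1, x.2) from
    (Finset.prod_sigma univ (fun i => Finset.Ioi i) (fun x => f (x.1, x.2))).symm]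
  refine Finset.prod_bij' (fun p _ => (⟨p.1, p.2⟩ : Σ _ : Fin m, Fin m))
    (fun x _ => (x.1, x.2)) ?_ ?_ ?_ ?_ ?_
  · intro a ha; simpa using (Finset.mem_filter.mp ha).2
  · intro x hx; simp only [Finset.mem_sigma, Finset.mem_Ioi] at hx
    simp [hx.2]
  · intro a _; rfl
  · intro x _; rfl
  · intro a _; rfl

/-- The key partial-fraction identity:
`∑_k ∏_{m ≠ k} (a_k - t a_m)/(a_k - a_m) = 1 + t + ⋯ + t^{n-1}` for distinct `a`'s. -/
lemma key_lemma {L : Type*} [Field L] {ι : Type*} [DecidableEq ι] (t : L) (s : Finset ι) :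
    ∀ (a : ι → L), Set.InjOn a s →
      ∑ k ∈ s, ∏ m ∈ s.erase k, (a k - t * a m) / (a k - a m)
        = ∑ l ∈ Finset.range s.card, t ^ l := by
  induction s using Finset.strongInduction with
  | _ s ih =>
    intro a ha
    have hsub : ∀ k ∈ s, ∀ m ∈ s.erase k, a k - a m ≠ 0 := by
      intro k hk m hm
      refine sub_ne_zero.mpr fun h => Finset.ne_of_mem_erase hm ?_
      exact (ha (Finset.mem_of_mem_erase hm) hk h.symm)
    by_cases ht : t = 1
    · subst ht
      rw [Finset.sum_congr rfl (fun k hk => Finset.prod_eq_one fun m hm => by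
        rw [one_mul, div_self (hsub k hk m hm)])]
      simp
    rcases Finset.eq_empty_or_nonempty s with rfl | ⟨j0, hj0⟩
    · simp
    by_cases h0 : ∃ j ∈ s, a j = 0
    · obtain ⟨j, hj, haj⟩ := h0
      have hne0 : ∀ m, m ∈ s → m ≠ j → a m ≠ 0 := fun m hm hmj h =>
        hmj (ha hm hj (h.trans haj.symm))
      rw [← Finset.add_sum_erase _ _ hj]
      have h1 : ∏ m ∈ s.erase j, (a j - t * a m) / (a j - a m) = t ^ (s.card - 1) := by
        rw [← Finset.card_erase_of_mem hj, ← Finset.prod_const]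
        refine Finset.prod_congr rfl fun m hm => ?_
        have : a j - t * a m = t * (a j - a m) := by rw [haj]; ring
        rw [this, mul_div_assoc, div_self (hsub j hj m hm), mul_one]
      have h2 : ∀ k ∈ s.erase j, ∏ m ∈ s.erase k, (a k - t * a m) / (a k - a m)
          = ∏ m ∈ (s.erase j).erase k, (a k - t * a m) / (a k - a m) := by
        intro k hk
        have hkj : k ≠ j := Finset.ne_of_mem_erase hk
        have hks : k ∈ s := Finset.mem_of_mem_erase hk
        have hjk : j ∈ s.erase k := Finset.mem_erase.mpr ⟨fun h => hkj h.symm, hj⟩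
        rw [← Finset.mul_prod_erase _ _ hjk, haj, mul_zero, sub_zero,
          div_self (hne0 k hks hkj), one_mul, Finset.erase_right_comm]
      rw [h1, Finset.sum_congr rfl h2,
        ih (s.erase j) (Finset.erase_ssubset hj) a (ha.mono (Finset.erase_subset _ _))]
      obtain ⟨n, hn⟩ : ∃ n, s.card = n + 1 :=
        ⟨s.card - 1, (Nat.succ_pred_eq_of_pos (Finset.card_pos.mpr ⟨j0, hj0⟩)).symm⟩
      rw [Finset.card_erase_of_mem hj, hn]
      simp [Finset.sum_range_succ, add_comm]
    · push_neg at h0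
      obtain ⟨n, hn⟩ : ∃ n, s.card = n + 1 :=
        ⟨s.card - 1, (Nat.succ_pred_eq_of_pos (Finset.card_pos.mpr ⟨j0, hj0⟩)).symm⟩
      set P := ∏ m ∈ s, a m with hP
      have hPne : P ≠ 0 := Finset.prod_ne_zero_iff.mpr h0
      set g : Polynomial L := ∏ m ∈ s, (Polynomial.X - Polynomial.C (t * a m)) with hgdef
      set w : Polynomial L := ∏ m ∈ s, (Polynomial.X - Polynomial.C (a m)) with hwdef
      have hgm : g.Monic :=
        Polynomial.monic_prod_of_monic _ _ fun m _ => Polynomial.monic_X_sub_C _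
      have hwm : w.Monic :=
        Polynomial.monic_prod_of_monic _ _ fun m _ => Polynomial.monic_X_sub_C _
      have hdg : g.natDegree = s.card := by
        rw [hgdef, Polynomial.natDegree_prod_of_monic _ _
          fun m _ => Polynomial.monic_X_sub_C _]
        simp only [Polynomial.natDegree_X_sub_C, Finset.sum_const, smul_eq_mul, mul_one]
      have hdw : w.natDegree = s.card := by
        rw [hwdef, Polynomial.natDegree_prod_of_monic _ _
          fun m _ => Polynomial.monic_X_sub_C _]
        simp only [Polynomial.natDegree_X_sub_C, Finset.sum_const, smul_eq_mul, mul_one]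
      have hdeg : (g - w).degree < (s.card : WithBot ℕ) := by
        have h1 : g.degree = w.degree := by
          rw [Polynomial.degree_eq_natDegree hgm.ne_zero,
            Polynomial.degree_eq_natDegree hwm.ne_zero, hdg, hdw]
        have h2 := Polynomial.degree_sub_lt h1 hgm.ne_zero
          (by rw [hgm.leadingCoeff, hwm.leadingCoeff])
        rwa [Polynomial.degree_eq_natDegree hgm.ne_zero, hdg] at h2
      have hinterp := Lagrange.eq_interpolate (f := g - w) ha hdeg
      have heval := congrArg (Polynomial.eval (0 : L)) hinterp
      rw [Lagrange.interpolate_apply, Polynomial.eval_finset_sum] at heval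
      simp only [Polynomial.eval_mul, Polynomial.eval_C] at heval
      have hterm : ∀ k ∈ s, (g - w).eval (a k) * (Lagrange.basis s a k).eval 0
          = ((1 - t) * ((-1) ^ n * P)) * ∏ m ∈ s.erase k, (a k - t * a m) / (a k - a m) := by
        intro k hk
        have hwk : w.eval (a k) = 0 := by
          rw [hwdef, Polynomial.eval_prod]
          exact Finset.prod_eq_zero hk (by simp)
        have hgk : g.eval (a k) = ((1 - t) * a k) * ∏ m ∈ s.erase k, (a k - t * a m) := by
          rw [hgdef, Polynomial.eval_prod]
          simp only [Polynomial.eval_sub, Polynomial.eval_X, Polynomial.eval_C]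
          rw [← Finset.mul_prod_erase _ _ hk]
          ring
        have hbk : (Lagrange.basis s a k).eval 0
            = ∏ m ∈ s.erase k, ((0 - a m) * (a k - a m)⁻¹) := by
          rw [Lagrange.basis, Polynomial.eval_prod]
          refine Finset.prod_congr rfl fun m hm => ?_
          rw [Lagrange.basisDivisor]
          simp [mul_comm]
        rw [Polynomial.eval_sub, hwk, sub_zero, hgk, hbk, mul_assoc,
          ← Finset.prod_mul_distrib]
        have hfac : ∀ m ∈ s.erase k, (a k - t * a m) * ((0 - a m) * (a k - a m)⁻¹)
            = (-1 * a m) * ((a k - t * a m) / (a k - a m)) := by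
          intro m hm; rw [div_eq_mul_inv]; ring
        rw [Finset.prod_congr rfl hfac, Finset.prod_mul_distrib, Finset.prod_mul_distrib,
          Finset.prod_const, Finset.card_erase_of_mem hk, hn, Nat.add_sub_cancel,
          hP, ← Finset.mul_prod_erase _ _ hk]
        ring
      rw [Finset.sum_congr rfl hterm, ← Finset.mul_sum] at heval
      have hg0 : g.eval 0 = (-1) ^ (n+1) * (t ^ (n+1) * P) := by
        rw [hgdef, Polynomial.eval_prod]
        simp only [Polynomial.eval_sub, Polynomial.eval_X, Polynomial.eval_C, zero_sub]
        rw [Finset.prod_congr rfl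
          (fun m _ => (by ring : -(t * a m) = (-1 * t) * a m)),
          Finset.prod_mul_distrib, Finset.prod_const, hP, ← hn]
        ring
      have hw0 : w.eval 0 = (-1) ^ (n+1) * P := by
        rw [hwdef, Polynomial.eval_prod]
        simp only [Polynomial.eval_sub, Polynomial.eval_X, Polynomial.eval_C, zero_sub]
        rw [Finset.prod_congr rfl (fun m _ => (by ring : -(a m) = (-1) * a m)),
          Finset.prod_mul_distrib, Finset.prod_const, hP, ← hn]
      rw [Polynomial.eval_sub, hg0, hw0] at heval
      have hgeom : (1 - t) * ∑ l ∈ Finset.range (n+1), t ^ l = 1 - t ^ (n+1) := by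
        have h3 := geom_sum_mul t (n+1)
        linear_combination -h3
      rw [hn]
      have hc : (1 - t) * ((-1 : L)^n * P) ≠ 0 :=
        mul_ne_zero (sub_ne_zero.mpr fun h => ht h.symm)
          (mul_ne_zero (pow_ne_zero _ (by norm_num)) hPne)
      apply mul_left_cancel₀ hc
      rw [← heval]
      linear_combination (-((-1 : L)^n * P)) * hgeom

/-- Reindexing a product over `Fin n` through `m ↦ swap 0 k (m.succ)`. -/
lemma prod_swap_succ {M : Type*} [CommMonoid M] {n : ℕ} (k : Fin (n+1)) (G : Fin (n+1) → M) :
    ∏ m : Fin n, G (Equiv.swap 0 k m.succ) = ∏ m ∈ Finset.univ.erase k, G m := by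
  have hne : ∀ b : Fin (n+1), b ≠ k → Equiv.swap 0 k b ≠ 0 := by
    intro b hb h
    exact hb (by simpa using (Equiv.swap 0 k).injective (h.trans (Equiv.swap_apply_right 0 k).symm))
  refine Finset.prod_bij' (fun m _ => Equiv.swap 0 k m.succ)
    (fun b hb => (Equiv.swap 0 k b).pred (hne b (Finset.ne_of_mem_erase hb)))
    ?_ ?_ ?_ ?_ ?_
  · intro m _
    refine Finset.mem_erase.mpr ⟨fun h => ?_, Finset.mem_univ _⟩
    have := (Equiv.swap 0 k).injective (h.trans (Equiv.swap_apply_left 0 k).symm)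
    exact (Fin.succ_ne_zero m) this
  · intro b _; exact Finset.mem_univ _
  · intro m _
    simp [Fin.pred_succ]
  · intro b hb
    simp [Fin.succ_pred]
  · intro m _; rfl

/-- The value-level symmetrization identity for an injective family in a field. -/
lemma main_lemma {L : Type*} [Field L] (t : L) :
    ∀ (n : ℕ) (x : Fin n → L), Function.Injective x →
      ∑ σ : Equiv.Perm (Fin n), ∏ i : Fin n, ∏ j ∈ Finset.Ioi i,
          ((x (σ i) - t * x (σ j)) / (x (σ i) - x (σ j)))
        = ∏ k ∈ Finset.range n, ∑ l ∈ Finset.range (k + 1), t ^ l := by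
  intro n
  induction n with
  | zero => intro x hx; simp
  | succ n ih =>
    intro x hx
    rw [← Equiv.sum_comp (Equiv.Perm.decomposeFin (n := n)).symm
      (fun σ : Equiv.Perm (Fin (n+1)) => ∏ i : Fin (n+1), ∏ j ∈ Finset.Ioi i,
        ((x (σ i) - t * x (σ j)) / (x (σ i) - x (σ j)))), Fintype.sum_prod_type]
    have hstep : ∀ (k : Fin (n+1)) (τ : Equiv.Perm (Fin n)),
        (∏ i : Fin (n+1), ∏ j ∈ Finset.Ioi i,
          ((x (Equiv.Perm.decomposeFin.symm (k, τ) i)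
              - t * x (Equiv.Perm.decomposeFin.symm (k, τ) j))
            / (x (Equiv.Perm.decomposeFin.symm (k, τ) i)
              - x (Equiv.Perm.decomposeFin.symm (k, τ) j))))
        = (∏ m ∈ Finset.univ.erase k, (x k - t * x m) / (x k - x m))
          * ∏ i : Fin n, ∏ j ∈ Finset.Ioi i,
              ((x (Equiv.swap 0 k (τ i).succ) - t * x (Equiv.swap 0 k (τ j).succ))
                / (x (Equiv.swap 0 k (τ i).succ) - x (Equiv.swap 0 k (τ j).succ))) := by
      intro k τ
      rw [Fin.prod_univ_succ]
      congr 1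
      · rw [Fin.prod_Ioi_zero]
        simp only [Equiv.Perm.decomposeFin_symm_apply_zero,
          Equiv.Perm.decomposeFin_symm_apply_succ]
        calc ∏ j : Fin n, ((x k - t * x (Equiv.swap 0 k (τ j).succ))
                / (x k - x (Equiv.swap 0 k (τ j).succ)))
            = ∏ m : Fin n, ((x k - t * x (Equiv.swap 0 k m.succ))
                / (x k - x (Equiv.swap 0 k m.succ))) :=
              Equiv.prod_comp τ (fun m => (x k - t * x (Equiv.swap 0 k m.succ))
                / (x k - x (Equiv.swap 0 k m.succ)))
          _ = _ := prod_swap_succ k (fun m => (x k - t * x m) / (x k - x m))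
      · refine Finset.prod_congr rfl fun i _ => ?_
        rw [Fin.prod_Ioi_succ]
        refine Finset.prod_congr rfl fun j hj => ?_
        simp only [Equiv.Perm.decomposeFin_symm_apply_succ]
    simp only [hstep, ← Finset.mul_sum]
    have hinner : ∀ k : Fin (n+1),
        ∑ τ : Equiv.Perm (Fin n), ∏ i : Fin n, ∏ j ∈ Finset.Ioi i,
          ((x (Equiv.swap 0 k (τ i).succ) - t * x (Equiv.swap 0 k (τ j).succ))
            / (x (Equiv.swap 0 k (τ i).succ) - x (Equiv.swap 0 k (τ j).succ)))
        = ∏ k' ∈ Finset.range n, ∑ l ∈ Finset.range (k' + 1), t ^ l := fun k =>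
      ih (fun m => x (Equiv.swap 0 k m.succ))
        (fun m1 m2 h => Fin.succ_injective _ ((Equiv.swap 0 k).injective (hx h)))
    simp only [hinner]
    rw [← Finset.sum_mul]
    rw [show ∑ k : Fin (n+1), ∏ m ∈ Finset.univ.erase k, (x k - t * x m) / (x k - x m)
        = ∑ l ∈ Finset.range (n+1), t ^ l by
      have := key_lemma t (Finset.univ : Finset (Fin (n+1))) x hx.injOn
      rwa [Finset.card_univ, Fintype.card_fin] at this]
    rw [Finset.prod_range_succ, mul_comm]

set_option maxHeartbeats 1600000 in
set_option synthInstance.maxHeartbeats 800000 in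
/-- `∑ σ ∈ S_N, K_σ (∏_{1 ≤ i < j ≤ N} (x_i - t x_j)/(x_i - x_j)) = [N]_t!`. -/
theorem t_symmetrization_of_one {F : Type*} [Field F] (q t : F) (N : ℕ) :
    (∑ σ : Equiv.Perm (Fin N), permK σ
        (∏ p ∈ (Finset.univ : Finset (Fin N × Fin N)).filter (fun p => p.1 < p.2),
          ((algebraMap (MvPolynomial (Fin N) F) (FractionRing (MvPolynomial (Fin N) F)) (X p.1)
              - algebraMap (MvPolynomial (Fin N) F) _ (C t) *
                algebraMap (MvPolynomial (Fin N) F) _ (X p.2)) /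
           (algebraMap (MvPolynomial (Fin N) F) _ (X p.1)
              - algebraMap (MvPolynomial (Fin N) F) _ (X p.2)))))
      = algebraMap (MvPolynomial (Fin N) F) (FractionRing (MvPolynomial (Fin N) F))
          (C (∏ k ∈ Finset.range N, ∑ l ∈ Finset.range (k + 1), t ^ l)) := by
  have hmap : ∀ (σ : Equiv.Perm (Fin N)) (p : MvPolynomial (Fin N) F),
      permK σ (algebraMap (MvPolynomial (Fin N) F) (FractionRing (MvPolynomial (Fin N) F)) p)
        = algebraMap (MvPolynomial (Fin N) F) (FractionRing (MvPolynomial (Fin N) F))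
            (rename σ p) := by
    intro σ p
    rw [permK, IsFractionRing.ringEquivOfRingEquiv_algebraMap]
    rfl
  have hx : Function.Injective (fun i : Fin N =>
      algebraMap (MvPolynomial (Fin N) F) (FractionRing (MvPolynomial (Fin N) F)) (X i)) :=
    fun i j h => MvPolynomial.X_injective
      (IsFractionRing.injective (MvPolynomial (Fin N) F)
        (FractionRing (MvPolynomial (Fin N) F)) h)
  have hσ : ∀ σ : Equiv.Perm (Fin N),
      permK σ (∏ p ∈ (Finset.univ : Finset (Fin N × Fin N)).filter (fun p => p.1 < p.2),
          ((algebraMap (MvPolynomial (Fin N) F) (FractionRing (MvPolynomial (Fin N) F)) (X p.1)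
              - algebraMap (MvPolynomial (Fin N) F) _ (C t) *
                algebraMap (MvPolynomial (Fin N) F) _ (X p.2)) /
           (algebraMap (MvPolynomial (Fin N) F) _ (X p.1)
              - algebraMap (MvPolynomial (Fin N) F) _ (X p.2))))
      = ∏ i : Fin N, ∏ j ∈ Finset.Ioi i,
          ((algebraMap (MvPolynomial (Fin N) F) (FractionRing (MvPolynomial (Fin N) F)) (X (σ i))
              - algebraMap (MvPolynomial (Fin N) F) _ (C t) *
                algebraMap (MvPolynomial (Fin N) F) _ (X (σ j))) /
           (algebraMap (MvPolynomial (Fin N) F) _ (X (σ i))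
              - algebraMap (MvPolynomial (Fin N) F) _ (X (σ j)))) := by
    intro σ
    rw [map_prod, pair_prod_eq]
    refine Finset.prod_congr rfl fun i _ => Finset.prod_congr rfl fun j _ => ?_
    simp only [map_div₀, map_sub, map_mul, hmap, rename_X, rename_C]
  calc (∑ σ : Equiv.Perm (Fin N), permK σ
        (∏ p ∈ (Finset.univ : Finset (Fin N × Fin N)).filter (fun p => p.1 < p.2),
          ((algebraMap (MvPolynomial (Fin N) F) (FractionRing (MvPolynomial (Fin N) F)) (X p.1)
              - algebraMap (MvPolynomial (Fin N) F) _ (C t) *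
                algebraMap (MvPolynomial (Fin N) F) _ (X p.2)) /
           (algebraMap (MvPolynomial (Fin N) F) _ (X p.1)
              - algebraMap (MvPolynomial (Fin N) F) _ (X p.2)))))
      = ∑ σ : Equiv.Perm (Fin N), ∏ i : Fin N, ∏ j ∈ Finset.Ioi i,
          ((algebraMap (MvPolynomial (Fin N) F) (FractionRing (MvPolynomial (Fin N) F)) (X (σ i))
              - algebraMap (MvPolynomial (Fin N) F) _ (C t) *
                algebraMap (MvPolynomial (Fin N) F) _ (X (σ j))) /
           (algebraMap (MvPolynomial (Fin N) F) _ (X (σ i))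
              - algebraMap (MvPolynomial (Fin N) F) _ (X (σ j)))) :=
        Finset.sum_congr rfl fun σ _ => hσ σ
    _ = ∏ k ∈ Finset.range N, ∑ l ∈ Finset.range (k + 1),
          (algebraMap (MvPolynomial (Fin N) F) (FractionRing (MvPolynomial (Fin N) F)) (C t)) ^ l :=
        main_lemma
          (algebraMap (MvPolynomial (Fin N) F) (FractionRing (MvPolynomial (Fin N) F)) (C t)) N
          (fun i : Fin N =>
            algebraMap (MvPolynomial (Fin N) F) (FractionRing (MvPolynomial (Fin N) F)) (X i)) hx
    _ = algebraMap (MvPolynomial (Fin N) F) (FractionRing (MvPolynomial (Fin N) F))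
          (C (∏ k ∈ Finset.range N, ∑ l ∈ Finset.range (k + 1), t ^ l)) := by
        rw [show (algebraMap (MvPolynomial (Fin N) F) (FractionRing (MvPolynomial (Fin N) F))
            ((C : F →+* MvPolynomial (Fin N) F)
              (∏ k ∈ Finset.range N, ∑ l ∈ Finset.range (k + 1), t ^ l)))
          = ((algebraMap (MvPolynomial (Fin N) F)
              (FractionRing (MvPolynomial (Fin N) F))).comp (C : F →+* MvPolynomial (Fin N) F))
              (∏ k ∈ Finset.range N, ∑ l ∈ Finset.range (k + 1), t ^ l) from rfl]
        rw [map_prod]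
        refine Finset.prod_congr rfl fun k _ => ?_
        rw [map_sum]
        refine Finset.sum_congr rfl fun l _ => ?_
        rw [map_pow, RingHom.comp_apply]
end

section
/- Let J be a subset of [N] = {1,...,N} of size r and L = [N] \ J. Then the sum over all permutations sigma in S_N with sigma([N-r+1, N]) = J of K_sigma applied to prod_{1 <= i < j <= N} (x_i - t x_j)/(x_i - x_j) equals [r]_t! [N-r]_t! times prod_{(i,j) in J x L} (t x_i - x_j)/(x_i - x_j). -/
/- STATEMENT 5: For `J ⊆ [N]` with `|J| = r` and `L = [N] \ J`,
   `∑_{σ ∈ S_N, σ([N-r+1,N]) = J} K_σ (∏_{1≤i<j≤N} (x_i - t x_j)/(x_i - x_j))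
      = [r]_t! [N-r]_t! ∏_{(i,j) ∈ J×L} (t x_i - x_j)/(x_i - x_j)`. -/

open MvPolynomial Finset

/-- The canonical embedding of polynomials into the field of rational functions. -/
noncomputable def am (F : Type*) [Field F] (N : ℕ) :
    MvPolynomial (Fin N) F →+* FractionRing (MvPolynomial (Fin N) F) :=
  algebraMap _ _

/-- The t-factorial `[k]_t! = ∏_{j=1}^{k} (1 + t + ⋯ + t^{j-1})`. -/
def tFact {F : Type*} [Field F] (t : F) (k : ℕ) : F :=
  ∏ j ∈ Finset.range k, ∑ l ∈ Finset.range (j + 1), t ^ l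

section Aux
variable {F : Type*} [Field F] {N : ℕ}

/-- the elementary factor -/
noncomputable def ff (F : Type*) [Field F] (N : ℕ) (t : F) (a b : Fin N) :
    FractionRing (MvPolynomial (Fin N) F) :=
  (am F N (X a) - am F N (C t) * am F N (X b)) / (am F N (X a) - am F N (X b))

/-- the product over ordered pairs -/
noncomputable def QQ (F : Type*) [Field F] (N : ℕ) (t : F) (n : ℕ) (w : Fin n → Fin N) :
    FractionRing (MvPolynomial (Fin N) F) :=
  ∏ p ∈ (Finset.univ : Finset (Fin n × Fin n)).filter (fun p => p.1 < p.2),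
    ff F N t (w p.1) (w p.2)

lemma am_inj : Function.Injective (am F N) :=
  IsFractionRing.injective (MvPolynomial (Fin N) F) (FractionRing (MvPolynomial (Fin N) F))

lemma amX_inj : Function.Injective (fun i : Fin N => am F N (X i)) :=
  fun _ _ h => MvPolynomial.X_injective (am_inj h)

lemma permK_amX (σ : Equiv.Perm (Fin N)) (i : Fin N) :
    permK σ (am F N (X i)) = am F N (X (σ i)) := by
  simpa [permK, am] using
    IsFractionRing.ringEquivOfRingEquiv_algebraMap
      (MvPolynomial.renameEquiv F σ).toRingEquiv (X i : MvPolynomial (Fin N) F)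

lemma permK_amC (σ : Equiv.Perm (Fin N)) (c : F) :
    permK σ (am F N (C c)) = am F N (C c) := by
  simpa [permK, am] using
    IsFractionRing.ringEquivOfRingEquiv_algebraMap
      (MvPolynomial.renameEquiv F σ).toRingEquiv (C c : MvPolynomial (Fin N) F)

end Aux

section Lag
variable {F : Type*} [Field F] {N : ℕ}

lemma lagrange_key (t : F) (s : Finset (Fin N)) (hne : s.Nonempty) :
    ∑ k ∈ s, ∏ a ∈ s.erase k, ff F N t a k
      = ∑ l ∈ Finset.range s.card, (am F N (C t)) ^ l := by
  classical
  set K := FractionRing (MvPolynomial (Fin N) F)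
  set v : Fin N → K := fun i => am F N (X i) with hv
  set T : K := am F N (C t) with hT
  have hvs' : ∀ s' : Finset (Fin N), Set.InjOn v s' := fun s' a _ b _ h => amX_inj h
  -- step A
  have hA : ∀ k ∈ s, ∏ a ∈ s.erase k, ff F N t a k
      = Polynomial.eval (T * v k) (Lagrange.basis s v k) := by
    intro k hk
    rw [Lagrange.basis, Polynomial.eval_prod]
    refine Finset.prod_congr rfl fun a ha => ?_
    rw [Lagrange.basisDivisor]
    simp only [Polynomial.eval_mul, Polynomial.eval_C, Polynomial.eval_sub, Polynomial.eval_X]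
    rw [inv_mul_eq_div, ff]
    rw [show (T * v k - v a) = -(v a - T * v k) by ring,
      show (v k - v a) = -(v a - v k) by ring, neg_div_neg_eq]
  rw [Finset.sum_congr rfl hA]
  -- step B
  have hB : ∀ k ∈ s, Polynomial.eval (T * v k) (Lagrange.basis s v k)
      = ∑ j ∈ Finset.range s.card, (Lagrange.basis s v k).coeff j * (T ^ j * v k ^ j) := by
    intro k hk
    rw [Polynomial.eval_eq_sum_range' (n := s.card)]
    · refine Finset.sum_congr rfl fun j _ => by rw [mul_pow]
    · rw [Lagrange.natDegree_basis (hvs' s) hk]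
      have := Finset.card_pos.mpr hne
      omega
  rw [Finset.sum_congr rfl hB, Finset.sum_comm]
  refine Finset.sum_congr rfl fun j hj => ?_
  -- step D/E
  have hE : (Polynomial.X ^ j : Polynomial K) = Lagrange.interpolate s v (fun i => v i ^ j) := by
    refine Lagrange.eq_interpolate_of_eval_eq (f := Polynomial.X ^ j) (r := fun i => v i ^ j) (hvs' s) ?_ (fun i _ => by simp)
    rw [Polynomial.degree_X_pow]
    exact_mod_cast Finset.mem_range.mp hj
  have hD : (1 : K) = ∑ k ∈ s, (Lagrange.basis s v k).coeff j * v k ^ j := by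
    have h1 : ((Polynomial.X ^ j : Polynomial K)).coeff j = 1 := by
      simp [Polynomial.coeff_X_pow]
    rw [hE, Lagrange.interpolate_apply, Polynomial.finset_sum_coeff] at h1
    rw [← h1]
    refine Finset.sum_congr rfl fun k _ => ?_
    rw [Polynomial.coeff_C_mul, mul_comm]
  calc ∑ k ∈ s, (Lagrange.basis s v k).coeff j * (T ^ j * v k ^ j)
      = T ^ j * ∑ k ∈ s, (Lagrange.basis s v k).coeff j * v k ^ j := by
        rw [Finset.mul_sum]; exact Finset.sum_congr rfl fun k _ => by ring
    _ = T ^ j := by rw [← hD, mul_one]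

end Lag

section Qsucc
variable {F : Type*} [Field F] {N : ℕ}

lemma QQ_succ (t : F) (n : ℕ) (w : Fin (n+1) → Fin N) :
    QQ F N t (n+1) w = QQ F N t n (w ∘ Fin.castSucc) *
      ∏ i : Fin n, ff F N t (w i.castSucc) (w (Fin.last n)) := by
  classical
  have h1 : QQ F N t n (w ∘ Fin.castSucc)
      = ∏ p ∈ ((Finset.univ : Finset (Fin (n+1) × Fin (n+1))).filter
          (fun p => p.1 < p.2 ∧ ¬ p.2 = Fin.last n)), ff F N t (w p.1) (w p.2) := by
    rw [QQ]
    refine Finset.prod_bij' (fun p _ => (p.1.castSucc, p.2.castSucc))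
      (fun p hp => (p.1.castPred
          (Fin.ne_last_of_lt (Finset.mem_filter.mp hp).2.1),
        p.2.castPred (Finset.mem_filter.mp hp).2.2)) ?_ ?_ ?_ ?_ ?_
    · intro p hp
      simp only [Finset.mem_filter, Finset.mem_univ, true_and] at hp ⊢
      refine ⟨by simpa [Fin.castSucc_lt_castSucc_iff] using hp, ?_⟩
      intro hc
      have := congrArg Fin.val hc
      simp only [Fin.coe_castSucc, Fin.val_last] at this
      exact absurd this (Nat.ne_of_lt p.2.isLt)
    · intro p hp
      simp only [Finset.mem_filter, Finset.mem_univ, true_and] at hp ⊢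
      exact Fin.castPred_lt_castPred_iff.mpr hp.1
    · intro p hp; simp
    · intro p hp; simp
    · intro p hp; rfl
  have h2 : (∏ i : Fin n, ff F N t (w i.castSucc) (w (Fin.last n)))
      = ∏ p ∈ ((Finset.univ : Finset (Fin (n+1) × Fin (n+1))).filter
          (fun p => p.1 < p.2 ∧ p.2 = Fin.last n)), ff F N t (w p.1) (w p.2) := by
    refine Finset.prod_bij' (fun i _ => (i.castSucc, Fin.last n))
      (fun p hp => p.1.castPred
        (Fin.ne_last_of_lt ((Finset.mem_filter.mp hp).2.2 ▸ (Finset.mem_filter.mp hp).2.1)))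
      ?_ ?_ ?_ ?_ ?_
    · intro i _
      simp only [Finset.mem_filter, Finset.mem_univ, true_and, and_true]
      exact Fin.castSucc_lt_last i
    · intro p hp; exact Finset.mem_univ _
    · intro i _; simp
    · intro p hp
      have h3 := (Finset.mem_filter.mp hp).2.2
      rw [Prod.ext_iff]
      simp [h3]
    · intro i _; rfl
  rw [h1, h2, mul_comm, QQ, ← Finset.prod_filter_mul_prod_filter_not
    ((Finset.univ : Finset (Fin (n+1) × Fin (n+1))).filter (fun p => p.1 < p.2))
    (fun p => p.2 = Fin.last n), Finset.filter_filter, Finset.filter_filter]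

end Qsucc

section Base
variable {F : Type*} [Field F] {N : ℕ}

lemma map_decomp {m : ℕ} (w : Fin (m+1) ↪ Fin N) :
    Finset.univ.map w
      = insert (w (Fin.last m)) (Finset.univ.map (Fin.castSuccEmb.trans w)) := by
  ext a
  simp only [Finset.mem_map, Finset.mem_insert, Finset.mem_univ, true_and,
    Function.Embedding.trans_apply]
  constructor
  · rintro ⟨i, rfl⟩
    induction i using Fin.lastCases with
    | last => exact Or.inl rfl
    | cast i => exact Or.inr ⟨i, rfl⟩
  · rintro (rfl | ⟨i, rfl⟩)
    · exact ⟨Fin.last m, rfl⟩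
    · exact ⟨_, rfl⟩

lemma last_notMem_trans {m : ℕ} (w : Fin (m+1) ↪ Fin N) :
    w (Fin.last m) ∉ Finset.univ.map (Fin.castSuccEmb.trans w) := by
  simp only [Finset.mem_map, Finset.mem_univ, true_and, Function.Embedding.trans_apply]
  rintro ⟨i, hi⟩
  exact absurd (w.injective hi) (Fin.castSucc_lt_last i).ne

lemma map_trans_erase {m : ℕ} (w : Fin (m+1) ↪ Fin N) :
    Finset.univ.map (Fin.castSuccEmb.trans w)
      = (Finset.univ.map w).erase (w (Fin.last m)) := by
  rw [map_decomp w, Finset.erase_insert (last_notMem_trans w)]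

/-- extension of an embedding by one value -/
noncomputable def extEmb {N m : ℕ} (k : Fin N) (w' : Fin m ↪ Fin N)
    (hk : k ∉ Finset.univ.map w') : Fin (m+1) ↪ Fin N :=
  ⟨Fin.lastCases k ⇑w', by
    intro i j h
    induction i using Fin.lastCases with
    | last =>
      induction j using Fin.lastCases with
      | last => rfl
      | cast j =>
        simp only [Fin.lastCases_last, Fin.lastCases_castSucc] at h
        exact absurd (Finset.mem_map.mpr ⟨j, Finset.mem_univ _, h.symm⟩) hk
    | cast i =>
      induction j using Fin.lastCases with
      | last =>
        simp only [Fin.lastCases_last, Fin.lastCases_castSucc] at h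
        exact absurd (Finset.mem_map.mpr ⟨i, Finset.mem_univ _, h⟩) hk
      | cast j =>
        simp only [Fin.lastCases_castSucc] at h
        rw [w'.injective h]⟩

@[simp] lemma extEmb_last {N m : ℕ} (k : Fin N) (w' : Fin m ↪ Fin N) (hk) :
    extEmb k w' hk (Fin.last m) = k := by
  show (Fin.lastCases k ⇑w' (Fin.last m) : Fin N) = k
  exact Fin.lastCases_last

@[simp] lemma extEmb_castSucc {N m : ℕ} (k : Fin N) (w' : Fin m ↪ Fin N) (hk) (i : Fin m) :
    extEmb k w' hk i.castSucc = w' i := by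
  show (Fin.lastCases k ⇑w' i.castSucc : Fin N) = w' i
  exact Fin.lastCases_castSucc i

lemma trans_extEmb {N m : ℕ} (k : Fin N) (w' : Fin m ↪ Fin N) (hk) :
    Fin.castSuccEmb.trans (extEmb k w' hk) = w' := by
  ext i
  show ((Fin.castSuccEmb.trans (extEmb k w' hk)) i : ℕ) = (w' i : ℕ)
  rw [Function.Embedding.trans_apply]
  show ((extEmb k w' hk) i.castSucc : ℕ) = (w' i : ℕ)
  rw [extEmb_castSucc]

lemma base_sum (t : F) : ∀ (m : ℕ) (s : Finset (Fin N)), s.card = m →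
    ∑ w ∈ (Finset.univ : Finset (Fin m ↪ Fin N)).filter
        (fun w => Finset.univ.map w = s), QQ F N t m ⇑w
      = am F N (C (tFact t m)) := by
  intro m
  induction m with
  | zero =>
    intro s hs
    have hs0 : s = ∅ := Finset.card_eq_zero.mp hs
    subst hs0
    have hall : ∀ w : Fin 0 ↪ Fin N, Finset.univ.map w = (∅ : Finset (Fin N)) :=
      fun w => by simp
    rw [Finset.filter_true_of_mem (fun w _ => hall w)]
    have h1 : ∀ w : Fin 0 ↪ Fin N, QQ F N t 0 ⇑w = 1 := by
      intro w
      rw [QQ]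
      apply Finset.prod_of_isEmpty
    rw [Finset.sum_congr rfl (fun w _ => h1 w), Finset.sum_const]
    have hcard : Fintype.card (Fin 0 ↪ Fin N) = 1 := by
      rw [Fintype.card_embedding_eq]
      simp
    simp [Finset.card_univ, hcard, tFact]
  | succ m ih =>
    intro s hs
    have hkmem : ∀ w : Fin (m+1) ↪ Fin N, Finset.univ.map w = s → w (Fin.last m) ∈ s :=
      fun w hw => hw ▸ Finset.mem_map.mpr ⟨Fin.last m, Finset.mem_univ _, rfl⟩
    -- reindex the sum by (w last, w ∘ castSucc)
    have hbij : ∑ w ∈ (Finset.univ : Finset (Fin (m+1) ↪ Fin N)).filter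
          (fun w => Finset.univ.map w = s), QQ F N t (m+1) ⇑w
        = ∑ q ∈ s.sigma (fun k => (Finset.univ : Finset (Fin m ↪ Fin N)).filter
            (fun w' => Finset.univ.map w' = s.erase k)),
            QQ F N t m ⇑q.2 * ∏ a ∈ s.erase q.1, ff F N t a q.1 := by
      refine Finset.sum_bij' (fun w _ => ⟨w (Fin.last m), Fin.castSuccEmb.trans w⟩)
        (fun q hq => extEmb q.1 q.2 ?_) ?_ ?_ ?_ ?_ ?_
      · -- q.1 ∉ map q.2
        have h2 := (Finset.mem_filter.mp (Finset.mem_sigma.mp hq).2).2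
        rw [h2]
        exact Finset.notMem_erase _ _
      · -- hi
        intro w hw
        have hw' := (Finset.mem_filter.mp hw).2
        refine Finset.mem_sigma.mpr ⟨hkmem w hw', Finset.mem_filter.mpr ⟨Finset.mem_univ _, ?_⟩⟩
        rw [map_trans_erase, hw']
      · -- hj
        intro q hq
        have hq1 := (Finset.mem_sigma.mp hq).1
        have hq2 := (Finset.mem_filter.mp (Finset.mem_sigma.mp hq).2).2
        refine Finset.mem_filter.mpr ⟨Finset.mem_univ _, ?_⟩
        rw [map_decomp, trans_extEmb, extEmb_last, hq2, Finset.insert_erase hq1]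
      · -- left inv
        intro w hw
        ext i
        induction i using Fin.lastCases with
        | last => rw [extEmb_last]
        | cast i =>
          rw [extEmb_castSucc]
          rfl
      · -- right inv
        intro q hq
        refine Sigma.ext ?_ (heq_of_eq ?_) <;> dsimp only
        · exact extEmb_last _ _ _
        · exact trans_extEmb _ _ _
      · -- values
        intro w hw
        have hw' := (Finset.mem_filter.mp hw).2
        dsimp only
        rw [QQ_succ]
        congr 1
        · calc (∏ i : Fin m, ff F N t (w i.castSucc) (w (Fin.last m)))
              = ∏ a ∈ Finset.univ.map (Fin.castSuccEmb.trans w),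
                  ff F N t a (w (Fin.last m)) := by
                rw [Finset.prod_map]
                rfl
            _ = ∏ a ∈ s.erase (w (Fin.last m)), ff F N t a (w (Fin.last m)) := by
                rw [map_trans_erase, hw']
    rw [hbij, Finset.sum_sigma]
    have hinner : ∀ k ∈ s,
        (∑ w' ∈ (Finset.univ : Finset (Fin m ↪ Fin N)).filter
            (fun w' => Finset.univ.map w' = s.erase k),
          QQ F N t m ⇑w' * ∏ a ∈ s.erase k, ff F N t a k)
        = am F N (C (tFact t m)) * ∏ a ∈ s.erase k, ff F N t a k := by
      intro k hk
      rw [← Finset.sum_mul, ih (s.erase k) (by simp [Finset.card_erase_of_mem hk, hs])]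
    rw [Finset.sum_congr rfl hinner, ← Finset.mul_sum, lagrange_key t s
      (Finset.card_pos.mp (by omega))]
    rw [hs, show tFact t (m+1) = tFact t m * ∑ l ∈ Finset.range (m+1), t ^ l from
      Finset.prod_range_succ _ _, map_mul, map_mul]
    congr 1
    simp [map_sum, map_pow]

end Base

section Block
variable {F : Type*} [Field F] {N : ℕ}

/-- embedding of the high block -/
def hiEmb {N r : ℕ} (hr : r ≤ N) : Fin r ↪ Fin N :=
  ⟨fun j => ⟨N - r + j.1, by omega⟩, by
    intro a b h
    have := congrArg Fin.val h
    simp only at this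
    exact Fin.ext (by omega)⟩

@[simp] lemma hiEmb_val {r : ℕ} (hr : r ≤ N) (j : Fin r) :
    (hiEmb hr j : ℕ) = N - r + j.1 := rfl

lemma QQ_block (t : F) {r : ℕ} (hr : r ≤ N) (w : Fin N → Fin N) :
    QQ F N t N w
      = QQ F N t (N-r) (w ∘ Fin.castLE (Nat.sub_le N r)) *
        QQ F N t r (w ∘ hiEmb hr) *
        ∏ i : Fin (N-r), ∏ j : Fin r,
          ff F N t (w (Fin.castLE (Nat.sub_le N r) i)) (w (hiEmb hr j)) := by
  classical
  have h1 : QQ F N t (N-r) (w ∘ Fin.castLE (Nat.sub_le N r))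
      = ∏ p ∈ (Finset.univ : Finset (Fin N × Fin N)).filter
          (fun p => (p.1 < p.2 ∧ ¬ (N - r ≤ (p.2 : ℕ)))), ff F N t (w p.1) (w p.2) := by
    rw [QQ]
    refine Finset.prod_bij'
      (fun (p : Fin (N-r) × Fin (N-r)) _ =>
        ((Fin.castLE (Nat.sub_le N r) p.1, Fin.castLE (Nat.sub_le N r) p.2) : Fin N × Fin N))
      (fun (p : Fin N × Fin N) hp => ((⟨p.1.1, by
          have hp' : p ∈ (Finset.univ : Finset (Fin N × Fin N)).filter
            (fun p => (p.1 < p.2 ∧ ¬ (N - r ≤ (p.2 : ℕ)))) := hp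
          have h := (Finset.mem_filter.mp hp').2
          have h2 := h.1; have h3 := h.2
          rw [Fin.lt_def] at h2
          omega⟩ : Fin (N-r)),
        (⟨p.2.1, by
          have hp' : p ∈ (Finset.univ : Finset (Fin N × Fin N)).filter
            (fun p => (p.1 < p.2 ∧ ¬ (N - r ≤ (p.2 : ℕ)))) := hp
          have h3 := (Finset.mem_filter.mp hp').2.2
          omega⟩ : Fin (N-r)))) ?_ ?_ ?_ ?_ ?_
    · intro p hp
      have h2 := (Finset.mem_filter.mp hp).2
      rw [Fin.lt_def] at h2
      simp only [Finset.mem_filter, Finset.mem_univ, true_and, Fin.lt_def, Fin.coe_castLE]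
      exact ⟨h2, by have := p.2.isLt; omega⟩
    · intro p hp
      have h2 := (Finset.mem_filter.mp hp).2.1
      rw [Fin.lt_def] at h2
      simp only [Finset.mem_filter, Finset.mem_univ, true_and, Fin.lt_def]
      exact h2
    · intro p hp; rfl
    · intro p hp; rfl
    · intro p hp; rfl
  have h2 : QQ F N t r (w ∘ hiEmb hr)
      = ∏ p ∈ (Finset.univ : Finset (Fin N × Fin N)).filter
          (fun p => (p.1 < p.2 ∧ (N - r ≤ (p.1 : ℕ)))), ff F N t (w p.1) (w p.2) := by
    rw [QQ]
    refine Finset.prod_bij'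
      (fun (p : Fin r × Fin r) _ => ((hiEmb hr p.1, hiEmb hr p.2) : Fin N × Fin N))
      (fun (p : Fin N × Fin N) hp =>
        ((⟨p.1.1 - (N - r), by
            have hp' : p ∈ (Finset.univ : Finset (Fin N × Fin N)).filter
              (fun p => (p.1 < p.2 ∧ (N - r ≤ (p.1 : ℕ)))) := hp
            have h := (Finset.mem_filter.mp hp').2
            have := p.1.isLt
            omega⟩ : Fin r),
         (⟨p.2.1 - (N - r), by
            have hp' : p ∈ (Finset.univ : Finset (Fin N × Fin N)).filter
              (fun p => (p.1 < p.2 ∧ (N - r ≤ (p.1 : ℕ)))) := hp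
            have h := (Finset.mem_filter.mp hp').2
            have h2 := h.1
            rw [Fin.lt_def] at h2
            have := p.2.isLt
            omega⟩ : Fin r))) ?_ ?_ ?_ ?_ ?_
    · intro p hp
      have h2 := (Finset.mem_filter.mp hp).2
      rw [Fin.lt_def] at h2
      simp only [Finset.mem_filter, Finset.mem_univ, true_and, Fin.lt_def, hiEmb_val]
      exact ⟨by omega, by omega⟩
    · intro p hp
      have h2 := (Finset.mem_filter.mp hp).2
      obtain ⟨h3, h4⟩ := h2
      rw [Fin.lt_def] at h3
      refine Finset.mem_filter.mpr ⟨Finset.mem_univ _, ?_⟩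
      rw [Fin.lt_def]
      show p.1.1 - (N - r) < p.2.1 - (N - r)
      omega
    · intro p hp
      dsimp only
      ext
      · show (hiEmb hr p.1).1 - (N - r) = p.1.1
        simp only [hiEmb_val]
        omega
      · show (hiEmb hr p.2).1 - (N - r) = p.2.1
        simp only [hiEmb_val]
        omega
    · intro p hp
      have hp'' := (Finset.mem_filter.mp hp).2
      have h2 := hp''.2
      have h3 := hp''.1
      rw [Fin.lt_def] at h3
      dsimp only
      ext
      · show N - r + (p.1.1 - (N - r)) = p.1.1
        omega
      · show N - r + (p.2.1 - (N - r)) = p.2.1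
        omega
    · intro p hp; rfl
  have h3 : (∏ i : Fin (N-r), ∏ j : Fin r,
        ff F N t (w (Fin.castLE (Nat.sub_le N r) i)) (w (hiEmb hr j)))
      = ∏ p ∈ (Finset.univ : Finset (Fin N × Fin N)).filter
          (fun p => (¬ (N - r ≤ (p.1 : ℕ)) ∧ N - r ≤ (p.2 : ℕ))), ff F N t (w p.1) (w p.2) := by
    rw [← Finset.prod_product']
    refine Finset.prod_bij'
      (fun (p : Fin (N-r) × Fin r) _ =>
        ((Fin.castLE (Nat.sub_le N r) p.1, hiEmb hr p.2) : Fin N × Fin N))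
      (fun (p : Fin N × Fin N) hp =>
        ((⟨p.1.1, by
          have hp' : p ∈ (Finset.univ : Finset (Fin N × Fin N)).filter
            (fun p => (¬ (N - r ≤ (p.1 : ℕ)) ∧ N - r ≤ (p.2 : ℕ))) := hp
          have h := (Finset.mem_filter.mp hp').2.1
          omega⟩ : Fin (N-r)),
         (⟨p.2.1 - (N - r), by
            have hp' : p ∈ (Finset.univ : Finset (Fin N × Fin N)).filter
              (fun p => (¬ (N - r ≤ (p.1 : ℕ)) ∧ N - r ≤ (p.2 : ℕ))) := hp
            have h := (Finset.mem_filter.mp hp').2.2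
            have := p.2.isLt
            omega⟩ : Fin r))) ?_ ?_ ?_ ?_ ?_
    · intro p hp
      simp only [Finset.mem_filter, Finset.mem_univ, true_and, Fin.coe_castLE, hiEmb_val]
      have := p.1.isLt
      constructor <;> omega
    · intro p hp
      exact Finset.mem_univ _
    · intro p hp
      dsimp only
      ext
      · rfl
      · show (hiEmb hr p.2).1 - (N - r) = p.2.1
        simp only [hiEmb_val]
        omega
    · intro p hp
      have h2 := (Finset.mem_filter.mp hp).2.2
      dsimp only
      ext
      · rfl
      · show N - r + (p.2.1 - (N - r)) = p.2.1
        omega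
    · intro p hp; rfl
  rw [h1, h2, h3, QQ]
  have e1 : ((Finset.univ : Finset (Fin N × Fin N)).filter (fun p => p.1 < p.2))
      = ((Finset.univ : Finset (Fin N × Fin N)).filter
          (fun p => p.1 < p.2 ∧ ¬ (N - r ≤ (p.2 : ℕ)))) ∪
        (((Finset.univ : Finset (Fin N × Fin N)).filter
          (fun p => p.1 < p.2 ∧ (N - r ≤ (p.1 : ℕ))))) ∪
        ((Finset.univ : Finset (Fin N × Fin N)).filter
          (fun p => (¬ (N - r ≤ (p.1 : ℕ)) ∧ N - r ≤ (p.2 : ℕ)))) := by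
    ext p
    simp only [Finset.mem_filter, Finset.mem_univ, true_and, Finset.mem_union, Fin.lt_def]
    constructor
    · intro h
      by_cases hc : N - r ≤ (p.2 : ℕ)
      · by_cases hd : N - r ≤ (p.1 : ℕ)
        · exact Or.inl (Or.inr ⟨h, hd⟩)
        · exact Or.inr ⟨by omega, hc⟩
      · exact Or.inl (Or.inl ⟨h, hc⟩)
    · rintro ((⟨h, _⟩ | ⟨h, _⟩) | ⟨h1, h2⟩)
      · exact h
      · exact h
      · omega
  have hd1 : Disjoint
      ((Finset.univ : Finset (Fin N × Fin N)).filter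
        (fun p => p.1 < p.2 ∧ ¬ (N - r ≤ (p.2 : ℕ))))
      ((Finset.univ : Finset (Fin N × Fin N)).filter
        (fun p => p.1 < p.2 ∧ (N - r ≤ (p.1 : ℕ)))) := by
    rw [Finset.disjoint_left]
    intro p hp hp2
    simp only [Finset.mem_filter, Finset.mem_univ, true_and, Fin.lt_def] at hp hp2
    omega
  have hd2 : Disjoint
      (((Finset.univ : Finset (Fin N × Fin N)).filter
          (fun p => p.1 < p.2 ∧ ¬ (N - r ≤ (p.2 : ℕ)))) ∪
        (((Finset.univ : Finset (Fin N × Fin N)).filter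
          (fun p => p.1 < p.2 ∧ (N - r ≤ (p.1 : ℕ))))))
      ((Finset.univ : Finset (Fin N × Fin N)).filter
        (fun p => (¬ (N - r ≤ (p.1 : ℕ)) ∧ N - r ≤ (p.2 : ℕ)))) := by
    rw [Finset.disjoint_left]
    intro p hp hp2
    simp only [Finset.mem_union, Finset.mem_filter, Finset.mem_univ, true_and,
      Fin.lt_def] at hp hp2
    rcases hp with (⟨h, h2⟩ | ⟨h, h2⟩) <;> omega
  rw [e1, Finset.prod_union hd2, Finset.prod_union hd1]

end Block

section Main
variable {F : Type*} [Field F] {N : ℕ}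

set_option synthInstance.maxHeartbeats 1000000 in
lemma permK_prod (t : F) (σ : Equiv.Perm (Fin N)) :
    permK σ (∏ p ∈ (Finset.univ : Finset (Fin N × Fin N)).filter (fun p => p.1 < p.2),
      ((am F N (X p.1) - am F N (C t) * am F N (X p.2)) /
       (am F N (X p.1) - am F N (X p.2))))
      = QQ F N t N ⇑σ := by
  rw [map_prod, QQ]
  refine Finset.prod_congr rfl fun p _ => ?_
  rw [map_div₀, map_sub, map_sub, map_mul, permK_amX, permK_amX, permK_amC]
  rfl

noncomputable def mergePerm {N r : ℕ} (hr : r ≤ N) (J : Finset (Fin N))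
    (w1 : Fin (N-r) ↪ Fin N) (w2 : Fin r ↪ Fin N)
    (h1 : Finset.univ.map w1 = Jᶜ) (h2 : Finset.univ.map w2 = J) : Equiv.Perm (Fin N) :=
  Equiv.ofBijective (fun i => if h : (i : ℕ) < N - r then w1 ⟨i, h⟩
      else w2 ⟨(i : ℕ) - (N - r), by have := i.isLt; omega⟩)
    (Finite.injective_iff_bijective.mp (by
      intro a b hab
      dsimp only at hab
      by_cases ha : (a : ℕ) < N - r <;> by_cases hb : (b : ℕ) < N - r
      · rw [dif_pos ha, dif_pos hb] at hab
        have h3 := congrArg Fin.val (w1.injective hab)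
        simp only at h3
        exact Fin.ext h3
      · rw [dif_pos ha, dif_neg hb] at hab
        have hmem1 : w1 ⟨(a : ℕ), ha⟩ ∈ Finset.univ.map w1 :=
          Finset.mem_map.mpr ⟨_, Finset.mem_univ _, rfl⟩
        have hmem2 : w2 ⟨(b : ℕ) - (N - r), by have := b.isLt; omega⟩ ∈ Finset.univ.map w2 :=
          Finset.mem_map.mpr ⟨_, Finset.mem_univ _, rfl⟩
        rw [h1] at hmem1
        rw [h2] at hmem2
        rw [hab] at hmem1
        exact absurd hmem2 (Finset.mem_compl.mp hmem1)
      · rw [dif_neg ha, dif_pos hb] at hab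
        have hmem1 : w1 ⟨(b : ℕ), hb⟩ ∈ Finset.univ.map w1 :=
          Finset.mem_map.mpr ⟨_, Finset.mem_univ _, rfl⟩
        have hmem2 : w2 ⟨(a : ℕ) - (N - r), by have := a.isLt; omega⟩ ∈ Finset.univ.map w2 :=
          Finset.mem_map.mpr ⟨_, Finset.mem_univ _, rfl⟩
        rw [h1] at hmem1
        rw [h2] at hmem2
        rw [← hab] at hmem1
        exact absurd hmem2 (Finset.mem_compl.mp hmem1)
      · rw [dif_neg ha, dif_neg hb] at hab
        have h3 := congrArg Fin.val (w2.injective hab)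
        simp only at h3
        exact Fin.ext (by omega)))

lemma mergePerm_lo {r : ℕ} (hr : r ≤ N) (J : Finset (Fin N))
    (w1 : Fin (N-r) ↪ Fin N) (w2 : Fin r ↪ Fin N) (h1 h2) (i : Fin (N-r)) :
    mergePerm hr J w1 w2 h1 h2 (Fin.castLE (Nat.sub_le N r) i) = w1 i := by
  show (if h : ((Fin.castLE (Nat.sub_le N r) i : Fin N) : ℕ) < N - r
      then w1 ⟨((Fin.castLE (Nat.sub_le N r) i : Fin N) : ℕ), h⟩
      else w2 ⟨((Fin.castLE (Nat.sub_le N r) i : Fin N) : ℕ) - (N - r), _⟩) = w1 i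
  rw [dif_pos (by simpa using i.isLt)]
  exact congrArg w1 (Fin.ext rfl)

lemma mergePerm_hi {r : ℕ} (hr : r ≤ N) (J : Finset (Fin N))
    (w1 : Fin (N-r) ↪ Fin N) (w2 : Fin r ↪ Fin N) (h1 h2) (j : Fin r) :
    mergePerm hr J w1 w2 h1 h2 (hiEmb hr j) = w2 j := by
  show (if h : ((hiEmb hr j : Fin N) : ℕ) < N - r
      then w1 ⟨((hiEmb hr j : Fin N) : ℕ), h⟩
      else w2 ⟨((hiEmb hr j : Fin N) : ℕ) - (N - r), _⟩) = w2 j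
  rw [dif_neg (by simp only [hiEmb_val]; omega)]
  congr 1
  exact Fin.ext (by simp only [hiEmb_val]; omega)

lemma map_trans_image (m : ℕ) (e : Fin m ↪ Fin N) (σ : Equiv.Perm (Fin N)) :
    Finset.univ.map (e.trans σ.toEmbedding) = (Finset.univ.map e).image ⇑σ := by
  ext a
  simp only [Finset.mem_map, Finset.mem_image, Finset.mem_univ, true_and,
    Function.Embedding.trans_apply, Equiv.coe_toEmbedding]
  constructor
  · rintro ⟨i, rfl⟩
    exact ⟨e i, ⟨i, rfl⟩, rfl⟩
  · rintro ⟨b, ⟨i, rfl⟩, rfl⟩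
    exact ⟨i, rfl⟩

lemma image_compl_perm (σ : Equiv.Perm (Fin N)) (s : Finset (Fin N)) :
    (sᶜ).image ⇑σ = (s.image ⇑σ)ᶜ := by
  ext a
  simp only [Finset.mem_image, Finset.mem_compl]
  constructor
  · rintro ⟨b, hb, rfl⟩ ⟨c, hc, hcb⟩
    exact hb (σ.injective hcb ▸ hc)
  · intro h
    refine ⟨σ.symm a, fun hmem => h ⟨σ.symm a, hmem, σ.apply_symm_apply a⟩,
      σ.apply_symm_apply a⟩

lemma hi_map_eq {r : ℕ} (hr : r ≤ N) :
    Finset.univ.map (hiEmb hr)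
      = (Finset.univ : Finset (Fin N)).filter (fun i : Fin N => N - r ≤ (i : ℕ)) := by
  ext i
  simp only [Finset.mem_map, Finset.mem_filter, Finset.mem_univ, true_and]
  constructor
  · rintro ⟨j, rfl⟩
    simp only [hiEmb_val]
    omega
  · intro h
    have := i.isLt
    exact ⟨⟨(i : ℕ) - (N - r), by omega⟩, Fin.ext (by simp only [hiEmb_val]; omega)⟩

lemma lo_map_eq {r : ℕ} (hr : r ≤ N) :
    Finset.univ.map (Fin.castLEEmb (Nat.sub_le N r))
      = ((Finset.univ : Finset (Fin N)).filter (fun i : Fin N => N - r ≤ (i : ℕ)))ᶜ := by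
  ext i
  simp only [Finset.mem_map, Finset.mem_compl, Finset.mem_filter, Finset.mem_univ, true_and,
    Fin.coe_castLEEmb]
  constructor
  · rintro ⟨j, rfl⟩
    have := j.isLt
    simp only [Fin.coe_castLE]
    omega
  · intro h
    exact ⟨⟨(i : ℕ), by omega⟩, Fin.ext rfl⟩

end Main

lemma hiTrans_mergePerm {N r : ℕ} (hr : r ≤ N) (J : Finset (Fin N))
    (w1 : Fin (N-r) ↪ Fin N) (w2 : Fin r ↪ Fin N) (h1 h2) :
    (hiEmb hr).trans (mergePerm hr J w1 w2 h1 h2).toEmbedding = w2 := by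
  ext j
  exact congrArg Fin.val (mergePerm_hi hr J w1 w2 h1 h2 j)

lemma loTrans_mergePerm {N r : ℕ} (hr : r ≤ N) (J : Finset (Fin N))
    (w1 : Fin (N-r) ↪ Fin N) (w2 : Fin r ↪ Fin N) (h1 h2) :
    (Fin.castLEEmb (Nat.sub_le N r)).trans (mergePerm hr J w1 w2 h1 h2).toEmbedding = w1 := by
  ext i
  exact congrArg Fin.val (mergePerm_lo hr J w1 w2 h1 h2 i)

set_option maxHeartbeats 1000000 in
theorem t_symmetrization_subset {F : Type*} [Field F] (q t : F) (N r : ℕ) (hr : r ≤ N)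
    (J : Finset (Fin N)) (hJ : J.card = r) :
    (∑ σ ∈ (Finset.univ : Finset (Equiv.Perm (Fin N))).filter
        (fun σ : Equiv.Perm (Fin N) => ((Finset.univ : Finset (Fin N)).filter
            (fun i : Fin N => N - r ≤ (i : ℕ))).image (⇑σ) = J),
      permK σ
        (∏ p ∈ (Finset.univ : Finset (Fin N × Fin N)).filter (fun p => p.1 < p.2),
          ((am F N (X p.1) - am F N (C t) * am F N (X p.2)) /
           (am F N (X p.1) - am F N (X p.2)))))
      = am F N (C (tFact t r * tFact t (N - r))) *
        ∏ i ∈ J, ∏ j ∈ Jᶜ,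
          ((am F N (C t) * am F N (X i) - am F N (X j)) /
           (am F N (X i) - am F N (X j))) := by
  classical
  set X0 : FractionRing (MvPolynomial (Fin N) F) := ∏ a ∈ Jᶜ, ∏ b ∈ J, ff F N t a b with hX0def
  set A := (Finset.univ : Finset (Fin (N-r) ↪ Fin N)).filter
    (fun w => Finset.univ.map w = Jᶜ) with hAdef
  set B := (Finset.univ : Finset (Fin r ↪ Fin N)).filter
    (fun w => Finset.univ.map w = J) with hBdef
  have hcardc : (Jᶜ : Finset (Fin N)).card = N - r := by
    simp [Finset.card_compl, hJ]
  -- step 1: reindex the sum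
  have hbij : (∑ σ ∈ (Finset.univ : Finset (Equiv.Perm (Fin N))).filter
        (fun σ : Equiv.Perm (Fin N) => ((Finset.univ : Finset (Fin N)).filter
            (fun i : Fin N => N - r ≤ (i : ℕ))).image (⇑σ) = J),
      permK σ
        (∏ p ∈ (Finset.univ : Finset (Fin N × Fin N)).filter (fun p => p.1 < p.2),
          ((am F N (X p.1) - am F N (C t) * am F N (X p.2)) /
           (am F N (X p.1) - am F N (X p.2)))))
      = ∑ p ∈ B ×ˢ A, QQ F N t (N-r) ⇑p.2 * QQ F N t r ⇑p.1 * X0 := by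
    refine Finset.sum_bij'
      (fun (σ : Equiv.Perm (Fin N)) _ =>
        (((hiEmb hr).trans σ.toEmbedding, (Fin.castLEEmb (Nat.sub_le N r)).trans σ.toEmbedding)
          : (Fin r ↪ Fin N) × (Fin (N-r) ↪ Fin N)))
      (fun p hp => mergePerm hr J p.2 p.1
        (by
          have hp' : p ∈ B ×ˢ A := hp
          exact (Finset.mem_filter.mp (Finset.mem_product.mp hp').2).2)
        (by
          have hp' : p ∈ B ×ˢ A := hp
          exact (Finset.mem_filter.mp (Finset.mem_product.mp hp').1).2)) ?_ ?_ ?_ ?_ ?_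
    · -- hi
      intro σ hσ
      have hcond := (Finset.mem_filter.mp hσ).2
      refine Finset.mem_product.mpr ⟨Finset.mem_filter.mpr ⟨Finset.mem_univ _, ?_⟩,
        Finset.mem_filter.mpr ⟨Finset.mem_univ _, ?_⟩⟩
      · rw [map_trans_image, hi_map_eq hr, hcond]
      · rw [map_trans_image, lo_map_eq hr, image_compl_perm, hcond]
    · -- hj
      intro p hp
      refine Finset.mem_filter.mpr ⟨Finset.mem_univ _, ?_⟩
      rw [← hi_map_eq hr, ← map_trans_image, hiTrans_mergePerm]
      exact (Finset.mem_filter.mp (Finset.mem_product.mp hp).1).2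
    · -- left inv
      intro σ hσ
      dsimp only
      refine Equiv.ext fun i => ?_
      by_cases h : (i : ℕ) < N - r
      · have : i = Fin.castLE (Nat.sub_le N r) (⟨(i : ℕ), h⟩ : Fin (N - r)) := Fin.ext rfl
        rw [this, mergePerm_lo]
        rfl
      · have : i = hiEmb hr (⟨(i : ℕ) - (N - r), by have := i.isLt; omega⟩ : Fin r) := by
          apply Fin.ext
          simp only [hiEmb_val]
          omega
        rw [this, mergePerm_hi]
        rfl
    · -- right inv
      intro p hp
      rw [Prod.ext_iff]
      exact ⟨hiTrans_mergePerm hr J p.2 p.1 _ _, loTrans_mergePerm hr J p.2 p.1 _ _⟩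
    · -- values
      intro σ hσ
      have hcond := (Finset.mem_filter.mp hσ).2
      have hσJ : Finset.univ.map ((hiEmb hr).trans σ.toEmbedding) = J := by
        rw [map_trans_image, hi_map_eq hr, hcond]
      have hσJc : Finset.univ.map ((Fin.castLEEmb (Nat.sub_le N r)).trans σ.toEmbedding)
          = Jᶜ := by
        rw [map_trans_image, lo_map_eq hr, image_compl_perm, hcond]
      rw [permK_prod, QQ_block t hr ⇑σ]
      dsimp only
      congr 1
      -- remaining: cross term equals X0
      calc (∏ i : Fin (N-r), ∏ j : Fin r,
            ff F N t (σ (Fin.castLE (Nat.sub_le N r) i)) (σ (hiEmb hr j)))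
          = ∏ i : Fin (N-r), ∏ b ∈ Finset.univ.map ((hiEmb hr).trans σ.toEmbedding),
              ff F N t (σ (Fin.castLE (Nat.sub_le N r) i)) b := by
            refine Finset.prod_congr rfl fun i _ => ?_
            rw [Finset.prod_map]
            rfl
        _ = ∏ a ∈ Finset.univ.map ((Fin.castLEEmb (Nat.sub_le N r)).trans σ.toEmbedding),
              ∏ b ∈ Finset.univ.map ((hiEmb hr).trans σ.toEmbedding), ff F N t a b := by
            rw [Finset.prod_map]
            rfl
        _ = X0 := by rw [hσJ, hσJc]
  rw [hbij, Finset.sum_product]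
  have hstep : ∀ w2 ∈ B, (∑ w1 ∈ A, QQ F N t (N-r) ⇑w1 * QQ F N t r ⇑w2 * X0)
      = am F N (C (tFact t (N-r))) * (QQ F N t r ⇑w2 * X0) := by
    intro w2 _
    calc ∑ w1 ∈ A, QQ F N t (N-r) ⇑w1 * QQ F N t r ⇑w2 * X0
        = (∑ w1 ∈ A, QQ F N t (N-r) ⇑w1) * (QQ F N t r ⇑w2 * X0) := by
          rw [Finset.sum_mul]
          exact Finset.sum_congr rfl fun w1 _ => by ring
      _ = am F N (C (tFact t (N-r))) * (QQ F N t r ⇑w2 * X0) := by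
          rw [hAdef, base_sum t (N-r) Jᶜ hcardc]
  rw [Finset.sum_congr rfl hstep, ← Finset.mul_sum, ← Finset.sum_mul,
    hBdef, base_sum t r J hJ]
  have hX0 : X0 = ∏ i ∈ J, ∏ j ∈ Jᶜ,
      ((am F N (C t) * am F N (X i) - am F N (X j)) /
       (am F N (X i) - am F N (X j))) := by
    rw [hX0def, Finset.prod_comm]
    refine Finset.prod_congr rfl fun b _ => Finset.prod_congr rfl fun a _ => ?_
    rw [ff, show am F N (X a) - am F N (C t) * am F N (X b)
        = -(am F N (C t) * am F N (X b) - am F N (X a)) by ring,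
      show am F N (X a) - am F N (X b) = -(am F N (X b) - am F N (X a)) by ring,
      neg_div_neg_eq]
  rw [hX0, map_mul, map_mul, ← mul_assoc,
    mul_comm (am F N (C (tFact t (N-r)))) (am F N (C (tFact t r)))]
end

section
/- The antisymmetrization identity: applying the antisymmetrizer in the y-variables, A^{(y)}_m = sum over sigma in S_m of (-1)^{length(sigma)} K^{(y)}_sigma, to the product prod_{i+j <= m} (1 - t x_i y_j) times prod_{i+j >= m+2, i,j <= m} (1 - x_i y_j), yields (-1)^{binom(m,2)} times the t-Vandermonde prod_{1 <= i < j <= m}(t x_i - x_j) times the Vandermonde prod_{1 <= i < j <= m}(y_i - y_j). -/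
/- STATEMENT 9: The antisymmetrization identity
   `𝒜^{(y)}_m (∏_{i+j ≤ m} (1 - t x_i y_j) ∏_{i+j ≥ m+2, i,j ≤ m} (1 - x_i y_j))
      = (-1)^{C(m,2)} ∏_{i<j} (t x_i - x_j) ∏_{i<j} (y_i - y_j)`,
   where `𝒜^{(y)}_m = ∑_{σ ∈ S_m} (-1)^{ℓ(σ)} K^{(y)}_σ` acts on the `y`-variables.
   The variables `x_1,…,x_m` are indexed by `Sum.inl` and `y_1,…,y_m` by `Sum.inr`;
   indices below are 0-based, so `i + j ≤ m` (1-based) reads `i + j + 2 ≤ m`. -/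

section auxsec
open Finset Polynomial

variable {R : Type*} [CommRing R]

noncomputable def fpoly (t : R) (u v : ℕ → R) (n j : ℕ) : Polynomial R :=
  (∏ i ∈ Finset.range (n - 1 - j), (1 - Polynomial.C (t * u i) * Polynomial.X)) *
  (∏ i ∈ Finset.Ico (n - j) n, (1 - Polynomial.C (v i) * Polynomial.X))

lemma natDegree_one_sub_C_mul_X (a : R) : (1 - Polynomial.C a * Polynomial.X).natDegree ≤ 1 := by
  refine le_trans (Polynomial.natDegree_sub_le _ _) (max_le (by simp) ?_)
  exact le_trans (Polynomial.natDegree_C_mul_le _ _) Polynomial.natDegree_X_le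

lemma fpoly_natDegree_lt (t : R) (u v : ℕ → R) (n j : ℕ) (hj : j < n) :
    (fpoly t u v n j).natDegree < n := by
  have h1 : (∏ i ∈ Finset.range (n - 1 - j), (1 - Polynomial.C (t * u i) * Polynomial.X)).natDegree
      ≤ n - 1 - j :=
    le_trans (Polynomial.natDegree_prod_le _ _) (by
      refine le_trans (Finset.sum_le_sum fun i _ => natDegree_one_sub_C_mul_X (t * u i)) (by simp))
  have h2 : (∏ i ∈ Finset.Ico (n - j) n, (1 - Polynomial.C (v i) * Polynomial.X)).natDegree
      ≤ j :=
    le_trans (Polynomial.natDegree_prod_le _ _) (by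
      refine le_trans (Finset.sum_le_sum fun i _ => natDegree_one_sub_C_mul_X (v i)) (by
        simp [Nat.card_Ico]; omega))
  have := Polynomial.natDegree_mul_le (p := (∏ i ∈ Finset.range (n - 1 - j), (1 - Polynomial.C (t * u i) * Polynomial.X))) (q := (∏ i ∈ Finset.Ico (n - j) n, (1 - Polynomial.C (v i) * Polynomial.X)))
  unfold fpoly
  omega

lemma fpoly_sub (t : R) (u v : ℕ → R) (n j : ℕ) (hj : j < n) :
    fpoly t u v (n+1) j - fpoly t u v (n+1) (j+1)
      = Polynomial.C (v (n - j) - t * u (n - j - 1)) * Polynomial.X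
          * fpoly t u (fun i => v (i+1)) n j := by
  have h1 : n + 1 - 1 - j = (n - j - 1) + 1 := by omega
  have h2 : n + 1 - (j+1) = n - j := by omega
  have h3 : n + 1 - 1 - (j+1) = n - j - 1 := by omega
  have h4 : n - j < n + 1 := by omega
  have h5 : n - j + 1 = n + 1 - j := by omega
  have h6 : n - 1 - j = n - j - 1 := by omega
  have hG2 : (∏ i ∈ Finset.Ico (n - j) n, (1 - Polynomial.C (v (i+1)) * Polynomial.X))
      = ∏ i ∈ Finset.Ico (n + 1 - j) (n+1), (1 - Polynomial.C (v i) * Polynomial.X) := by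
    rw [Finset.prod_Ico_eq_prod_range, Finset.prod_Ico_eq_prod_range]
    have ha : n - (n - j) = j := by omega
    have hb : n + 1 - (n + 1 - j) = j := by omega
    rw [ha, hb]
    refine Finset.prod_congr rfl fun i _ => ?_
    have : n - j + i + 1 = n + 1 - j + i := by omega
    rw [this]
  unfold fpoly
  rw [h1, h2, h3, h6, Finset.prod_range_succ,
    Finset.prod_eq_prod_Ico_succ_bot h4, h5, hG2]
  rw [map_sub]
  generalize (∏ i ∈ Finset.range (n - j - 1), (1 - Polynomial.C (t * u i) * Polynomial.X)) = P
  generalize (∏ i ∈ Finset.Ico (n + 1 - j) (n+1), (1 - Polynomial.C (v i) * Polynomial.X)) = Q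
  ring

lemma det_fpoly_coeff (t : R) : ∀ (n : ℕ) (u v : ℕ → R),
    Matrix.det (Matrix.of fun j k : Fin n => (fpoly t u v n j).coeff (k : ℕ))
      = ∏ j ∈ Finset.range n, ∏ i ∈ Finset.range j, (t * u i - v j)
  | 0, u, v => by simp
  | (n+1), u, v => by
    set A : Matrix (Fin (n+1)) (Fin (n+1)) R :=
      Matrix.of fun j k : Fin (n+1) => (fpoly t u v (n+1) j).coeff (k : ℕ) with hA
    set E : Matrix (Fin (n+1)) (Fin (n+1)) R :=
      Matrix.of fun j k : Fin (n+1) =>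
        if j = k then (1:R) else if (k:ℕ) = (j:ℕ)+1 then -1 else 0 with hE
    have detE : E.det = 1 := by
      have hBT : E.BlockTriangular id := by
        intro i j h
        have hv : (j:ℕ) < (i:ℕ) := h
        simp only [hE, Matrix.of_apply]
        rw [if_neg (fun he => absurd (congrArg Fin.val he) (by omega)), if_neg (by omega)]
      rw [Matrix.det_of_upperTriangular hBT]
      simp [hE]
    set c : ℕ → R := fun j => v (n - j) - t * u (n - j - 1) with hc
    set g : ℕ → Polynomial R := fun j => fpoly t u (fun i => v (i+1)) n j with hg
    set D : Matrix (Fin (n+1)) (Fin (n+1)) R :=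
      Matrix.of fun j k : Fin (n+1) =>
        if (j:ℕ) < n then (Polynomial.C (c (j:ℕ)) * Polynomial.X * g (j:ℕ)).coeff (k:ℕ)
        else (fpoly t u v (n+1) n).coeff (k:ℕ) with hD
    have hEA : E * A = D := by
      ext j k
      rw [Matrix.mul_apply]
      have hsplit : ∀ l : Fin (n+1), E j l * A l k
          = (if j = l then A l k else 0) + (if (l:ℕ) = (j:ℕ)+1 then -A l k else 0) := by
        intro l
        simp only [hE, Matrix.of_apply]
        by_cases h1 : j = l
        · subst h1
          rw [if_pos rfl, if_pos rfl, if_neg (by omega), one_mul, add_zero]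
        · rw [if_neg h1, if_neg h1]
          by_cases h2 : (l:ℕ) = (j:ℕ)+1
          · rw [if_pos h2, if_pos h2, zero_add]; ring
          · rw [if_neg h2, if_neg h2, zero_mul, zero_add]
      rw [Finset.sum_congr rfl (fun l _ => hsplit l), Finset.sum_add_distrib,
        Finset.sum_ite_eq Finset.univ j (fun l => A l k)]
      simp only [Finset.mem_univ, if_pos]
      induction j using Fin.lastCases with
      | last =>
        have hno : ∀ l : Fin (n+1), ¬((l:ℕ) = ((Fin.last n):ℕ)+1) := by
          intro l; have := l.isLt; simp only [Fin.val_last]; omega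
        rw [Finset.sum_congr rfl (fun l _ => if_neg (hno l)), Finset.sum_const_zero, add_zero]
        simp only [hD, hA, Matrix.of_apply, Fin.val_last, lt_irrefl, if_false]
      | cast j =>
        have huniq : ∀ l : Fin (n+1), ((l:ℕ) = ((j.castSucc):ℕ)+1) ↔ l = j.succ := by
          intro l; rw [Fin.ext_iff, Fin.val_succ, Fin.coe_castSucc]
        rw [Finset.sum_congr rfl (fun l _ => by rw [if_congr (huniq l) rfl rfl]),
          Finset.sum_ite_eq' Finset.univ j.succ (fun l => -A l k)]
        simp only [Finset.mem_univ, if_pos]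
        have hjlt : (j : ℕ) < n := j.isLt
        simp only [hD, hA, Matrix.of_apply, Fin.coe_castSucc, Fin.val_succ, if_pos hjlt]
        rw [← sub_eq_add_neg, ← Polynomial.coeff_sub, fpoly_sub t u v n (j:ℕ) hjlt]
    have detAD : A.det = D.det := by
      rw [← hEA, Matrix.det_mul, detE, one_mul]
    have hD0 : ∀ i : Fin (n+1), i ≠ Fin.last n → D i 0 = 0 := by
      intro i hi
      have hlt : (i:ℕ) < n := by
        have h1 := i.isLt
        have h2 : (i:ℕ) ≠ n := fun h => hi (Fin.ext (by simp [Fin.val_last, h]))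
        omega
      simp only [hD, Matrix.of_apply, if_pos hlt]
      rw [mul_assoc, Polynomial.coeff_C_mul]
      simp [Polynomial.mul_coeff_zero]
    have hDlast0 : D (Fin.last n) 0 = 1 := by
      simp only [hD, Matrix.of_apply, Fin.val_last, lt_irrefl, if_false]
      unfold fpoly
      simp [Polynomial.coeff_zero_eq_eval_zero, Polynomial.eval_prod]
    have hsub : D.submatrix (Fin.last n).succAbove Fin.succ
        = Matrix.of (fun j k : Fin n =>
            c (j:ℕ) * (Matrix.of fun j k : Fin n => (g (j:ℕ)).coeff (k:ℕ)) j k) := by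
      ext j k
      simp only [Matrix.submatrix_apply, Fin.succAbove_last, hD, Matrix.of_apply,
        Fin.coe_castSucc, if_pos j.isLt, Fin.val_succ]
      rw [mul_assoc, Polynomial.coeff_C_mul, Polynomial.coeff_X_mul]
    rw [detAD, Matrix.det_succ_column_zero,
      Finset.sum_eq_single (Fin.last n) (fun i _ hne => by rw [hD0 i hne]; ring)
        (fun h => absurd (Finset.mem_univ _) h), hDlast0, hsub, Matrix.det_mul_column,
      det_fpoly_coeff t n u (fun i => v (i+1))]
    -- arithmetic
    have hprodc : (∏ j : Fin n, c (j:ℕ))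
        = (-1:R)^n * ∏ j ∈ Finset.range n, (t * u j - v (j+1)) := by
      rw [Fin.prod_univ_eq_prod_range (fun j => c j) n]
      have step1 : ∏ j ∈ Finset.range n, c j
          = ∏ j ∈ Finset.range n, (v ((n-1-j)+1) - t * u (n-1-j)) := by
        refine Finset.prod_congr rfl fun j hj => ?_
        have hj' : j < n := Finset.mem_range.mp hj
        simp only [hc]
        rw [show n - j - 1 = n-1-j from by omega, show n - j = (n-1-j)+1 from by omega]
      rw [step1, Finset.prod_range_reflect (fun j => v (j+1) - t * u j) n]
      have step2 : ∀ j, v (j+1) - t * u j = (-1:R) * (t * u j - v (j+1)) := fun j => by ring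
      rw [Finset.prod_congr rfl (fun j _ => step2 j), Finset.prod_mul_distrib,
        Finset.prod_const, Finset.card_range]
    rw [hprodc]
    rw [Finset.prod_range_succ' (fun j => ∏ i ∈ Finset.range j, (t * u i - v j)) n]
    have step3 : ∀ j, ∏ i ∈ Finset.range (j+1), (t * u i - v (j+1))
        = (∏ i ∈ Finset.range j, (t * u i - v (j+1))) * (t * u j - v (j+1)) := fun j =>
      Finset.prod_range_succ _ _
    rw [Finset.prod_congr rfl (fun j _ => step3 j), Finset.prod_mul_distrib]
    simp only [Finset.range_zero, Finset.prod_empty, mul_one, Fin.val_last]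
    have : ((-1:R)^n) * ((-1:R)^n) = 1 := by
      rw [← mul_pow]; norm_num
    linear_combination (∏ j ∈ Finset.range n, (t*u j - v (j+1))) *
      (∏ j ∈ Finset.range n, ∏ i ∈ Finset.range j, (t*u i - v (j+1))) * this

lemma prod_filter_pair' {α M : Type*} [Fintype α] [DecidableEq α] [CommMonoid M]
    (c : α × α → Prop) [DecidablePred c] (f : α × α → M) :
    ∏ p ∈ Finset.univ.filter c, f p
      = ∏ i : α, ∏ j : α, if c (i, j) then f (i, j) else 1 := by
  rw [Finset.prod_filter, Fintype.prod_prod_type (fun p => if c p then f p else 1)]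

lemma prod_filter_pair {α M : Type*} [Fintype α] [DecidableEq α] [CommMonoid M]
    (c : α × α → Prop) [DecidablePred c] (f : α × α → M) :
    ∏ p ∈ Finset.univ.filter c, f p
      = ∏ j : α, ∏ i : α, if c (i, j) then f (i, j) else 1 := by
  rw [Finset.prod_filter, Fintype.prod_prod_type (fun p => if c p then f p else 1),
    Finset.prod_comm]

end auxsec

open MvPolynomial Finset

theorem antisymmetrization_identity {F : Type*} [Field F] (q t : F) (m : ℕ) :
    (∑ σ : Equiv.Perm (Fin m),
        ((Equiv.Perm.sign σ : ℤ) : MvPolynomial (Fin m ⊕ Fin m) F) *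
          rename (Sum.map id ⇑σ)
            ((∏ p ∈ (Finset.univ : Finset (Fin m × Fin m)).filter
                (fun p => (p.1 : ℕ) + (p.2 : ℕ) + 2 ≤ m),
                (1 - C t * X (Sum.inl p.1) * X (Sum.inr p.2))) *
             (∏ p ∈ (Finset.univ : Finset (Fin m × Fin m)).filter
                (fun p => m + 2 ≤ (p.1 : ℕ) + (p.2 : ℕ) + 2),
                (1 - X (Sum.inl p.1) * X (Sum.inr p.2)))))
      = (-1 : MvPolynomial (Fin m ⊕ Fin m) F) ^ Nat.choose m 2 *
        (∏ p ∈ (Finset.univ : Finset (Fin m × Fin m)).filter (fun p => p.1 < p.2),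
            (C t * X (Sum.inl p.1) - X (Sum.inl p.2))) *
        (∏ p ∈ (Finset.univ : Finset (Fin m × Fin m)).filter (fun p => p.1 < p.2),
            (X (Sum.inr p.1) - X (Sum.inr p.2))) := by
  classical
  set u : ℕ → MvPolynomial (Fin m ⊕ Fin m) F :=
    fun i => if h : i < m then X (Sum.inl ⟨i, h⟩) else 0 with hu
  have hufin : ∀ i : Fin m, u (i : ℕ) = X (Sum.inl i) := by
    intro i; simp [hu, i.isLt]
  -- step 1 : the product rewritten via fpoly
  have hprod : ∀ w : Fin m → MvPolynomial (Fin m ⊕ Fin m) F,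
      (∏ p ∈ (Finset.univ : Finset (Fin m × Fin m)).filter
          (fun p => (p.1 : ℕ) + (p.2 : ℕ) + 2 ≤ m),
          (1 - C t * X (Sum.inl p.1) * w p.2)) *
        (∏ p ∈ (Finset.univ : Finset (Fin m × Fin m)).filter
          (fun p => m + 2 ≤ (p.1 : ℕ) + (p.2 : ℕ) + 2),
          (1 - X (Sum.inl p.1) * w p.2))
      = ∏ j : Fin m, Polynomial.eval (w j) (fpoly (C t) u u m (j : ℕ)) := by
    intro w
    rw [prod_filter_pair _ (fun p : Fin m × Fin m => (1 - C t * X (Sum.inl p.1) * w p.2)),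
      prod_filter_pair _ (fun p : Fin m × Fin m => (1 - X (Sum.inl p.1) * w p.2)),
      ← Finset.prod_mul_distrib]
    refine Finset.prod_congr rfl fun j _ => ?_
    have hj : (j : ℕ) < m := j.isLt
    have e1 : (∏ i : Fin m,
          if (i:ℕ) + (j:ℕ) + 2 ≤ m then (1 - C t * X (Sum.inl i) * w j) else 1)
        = ∏ i ∈ Finset.range (m - 1 - (j:ℕ)), (1 - C t * u i * w j) := by
      rw [show (∏ i : Fin m,
            if (i:ℕ) + (j:ℕ) + 2 ≤ m then (1 - C t * X (Sum.inl i) * w j) else 1)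
          = ∏ i ∈ Finset.range m,
            (if i + (j:ℕ) + 2 ≤ m then (1 - C t * u i * w j) else 1) from ?_,
        ← Finset.prod_filter]
      · refine Finset.prod_congr ?_ fun i _ => rfl
        ext i; simp only [Finset.mem_filter, Finset.mem_range]; omega
      · rw [← Fin.prod_univ_eq_prod_range]
        exact Finset.prod_congr rfl fun i _ => by rw [hufin i]
    have e2 : (∏ i : Fin m,
          if m + 2 ≤ (i:ℕ) + (j:ℕ) + 2 then (1 - X (Sum.inl i) * w j) else 1)
        = ∏ i ∈ Finset.Ico (m - (j:ℕ)) m, (1 - u i * w j) := by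
      rw [show (∏ i : Fin m,
            if m + 2 ≤ (i:ℕ) + (j:ℕ) + 2 then (1 - X (Sum.inl i) * w j) else 1)
          = ∏ i ∈ Finset.range m,
            (if m + 2 ≤ i + (j:ℕ) + 2 then (1 - u i * w j) else 1) from ?_,
        ← Finset.prod_filter]
      · refine Finset.prod_congr ?_ fun i _ => rfl
        ext i
        simp only [Finset.mem_filter, Finset.mem_range, Finset.mem_Ico]; omega
      · rw [← Fin.prod_univ_eq_prod_range]
        exact Finset.prod_congr rfl fun i _ => by rw [hufin i]
    rw [e1, e2]
    unfold fpoly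
    rw [Polynomial.eval_mul, Polynomial.eval_prod, Polynomial.eval_prod]
    rw [Finset.prod_congr rfl (fun i _ =>
        show Polynomial.eval (w j) (1 - Polynomial.C (C t * u i) * Polynomial.X)
          = 1 - C t * u i * w j from by simp [mul_assoc]),
      Finset.prod_congr rfl (fun i _ =>
        show Polynomial.eval (w j) (1 - Polynomial.C (u i) * Polynomial.X)
          = 1 - u i * w j from by simp)]
  -- step 2 : rename
  have hren : ∀ σ : Equiv.Perm (Fin m),
      rename (Sum.map id ⇑σ)
        ((∏ p ∈ (Finset.univ : Finset (Fin m × Fin m)).filter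
            (fun p => (p.1 : ℕ) + (p.2 : ℕ) + 2 ≤ m),
            (1 - C t * X (Sum.inl p.1) * X (Sum.inr p.2))) *
         (∏ p ∈ (Finset.univ : Finset (Fin m × Fin m)).filter
            (fun p => m + 2 ≤ (p.1 : ℕ) + (p.2 : ℕ) + 2),
            (1 - X (Sum.inl p.1) * X (Sum.inr p.2))))
      = ∏ j : Fin m, Polynomial.eval (X (Sum.inr (σ j))) (fpoly (C t) u u m (j : ℕ)) := by
    intro σ
    have h1 : ∀ p : Fin m × Fin m,
        rename (Sum.map id ⇑σ) (1 - C t * X (Sum.inl p.1) * X (Sum.inr p.2))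
          = 1 - C t * X (Sum.inl p.1) * X (Sum.inr (σ p.2)) := fun p => by simp
    have h2 : ∀ p : Fin m × Fin m,
        rename (Sum.map id ⇑σ)
            ((1 : MvPolynomial (Fin m ⊕ Fin m) F) - X (Sum.inl p.1) * X (Sum.inr p.2))
          = 1 - X (Sum.inl p.1) * X (Sum.inr (σ p.2)) := fun p => by
        simp only [map_sub, map_one, map_mul, rename_X, Sum.map_inl, Sum.map_inr, id_eq]
    refine Eq.trans ?_ (hprod (fun j => X (Sum.inr (σ j))))
    rw [map_mul, map_prod, map_prod]
    exact congrArg₂ (· * ·) (Finset.prod_congr rfl fun p _ => h1 p)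
      (Finset.prod_congr rfl fun p _ => h2 p)
  set M : Matrix (Fin m) (Fin m) (MvPolynomial (Fin m ⊕ Fin m) F) :=
    Matrix.of fun i j : Fin m =>
      Polynomial.eval (X (Sum.inr i)) (fpoly (C t) u u m (j : ℕ)) with hM
  have hLHS : (∑ σ : Equiv.Perm (Fin m),
        ((Equiv.Perm.sign σ : ℤ) : MvPolynomial (Fin m ⊕ Fin m) F) *
          rename (Sum.map id ⇑σ)
            ((∏ p ∈ (Finset.univ : Finset (Fin m × Fin m)).filter
                (fun p => (p.1 : ℕ) + (p.2 : ℕ) + 2 ≤ m),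
                (1 - C t * X (Sum.inl p.1) * X (Sum.inr p.2))) *
             (∏ p ∈ (Finset.univ : Finset (Fin m × Fin m)).filter
                (fun p => m + 2 ≤ (p.1 : ℕ) + (p.2 : ℕ) + 2),
                (1 - X (Sum.inl p.1) * X (Sum.inr p.2)))))
      = M.det := by
    rw [Matrix.det_apply']
    exact Finset.sum_congr rfl fun σ _ => by rw [hren σ]; rfl
  have hM2 : M = (Matrix.vandermonde (fun i : Fin m => X (Sum.inr i))) *
      Matrix.transpose (Matrix.of fun j k : Fin m => (fpoly (C t) u u m (j:ℕ)).coeff (k:ℕ)) := by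
    refine Matrix.ext fun i j => ?_
    rw [Matrix.mul_apply]
    simp only [hM, Matrix.of_apply, Matrix.transpose_apply, Matrix.vandermonde_apply]
    rw [Polynomial.eval_eq_sum_range' (fpoly_natDegree_lt (C t) u u m (j:ℕ) j.isLt)
      (X (Sum.inr i)), ← Fin.sum_univ_eq_sum_range]
    exact Finset.sum_congr rfl fun k _ => mul_comm _ _
  -- x-side product
  have hPx : (∏ p ∈ (Finset.univ : Finset (Fin m × Fin m)).filter (fun p => p.1 < p.2),
        (C t * X (Sum.inl p.1) - X (Sum.inl p.2)))
      = ∏ j ∈ Finset.range m, ∏ i ∈ Finset.range j, (C t * u i - u j) := by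
    rw [prod_filter_pair _ (fun p : Fin m × Fin m => (C t * X (Sum.inl p.1) - X (Sum.inl p.2)))]
    rw [show (∏ j : Fin m, ∏ i : Fin m,
          if (i, j).1 < (i, j).2 then C t * X (Sum.inl i) - X (Sum.inl j) else 1)
        = ∏ j : Fin m, ∏ i ∈ Finset.range (j:ℕ), (C t * u i - u (j:ℕ)) from ?_]
    · exact Fin.prod_univ_eq_prod_range
        (fun j => ∏ i ∈ Finset.range j, (C t * u i - u j)) m
    refine Finset.prod_congr rfl fun j _ => ?_
    rw [show (∏ i : Fin m, if (i, j).1 < (i, j).2 then C t * X (Sum.inl i) - X (Sum.inl j) else 1)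
        = ∏ i ∈ Finset.range m, (if i < (j:ℕ) then C t * u i - u (j:ℕ) else 1) from ?_,
      ← Finset.prod_filter]
    · refine Finset.prod_congr ?_ fun i _ => rfl
      ext i
      simp only [Finset.mem_filter, Finset.mem_range]
      have := j.isLt; omega
    · rw [← Fin.prod_univ_eq_prod_range]
      refine Finset.prod_congr rfl fun i _ => ?_
      rw [hufin i, hufin j]
      by_cases hij : (i:ℕ) < (j:ℕ) <;> simp [Fin.lt_def, hij]
  -- y-side product
  have hPy : (∏ i : Fin m, ∏ j ∈ Finset.Ioi i, (X (Sum.inr j) - X (Sum.inr i)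
        : MvPolynomial (Fin m ⊕ Fin m) F))
      = (-1 : MvPolynomial (Fin m ⊕ Fin m) F) ^ Nat.choose m 2 *
        ∏ p ∈ (Finset.univ : Finset (Fin m × Fin m)).filter (fun p => p.1 < p.2),
          (X (Sum.inr p.1) - X (Sum.inr p.2)) := by
    rw [prod_filter_pair' _ (fun p : Fin m × Fin m => (X (Sum.inr p.1) - X (Sum.inr p.2)
        : MvPolynomial (Fin m ⊕ Fin m) F))]
    rw [Finset.prod_congr (rfl : (Finset.univ : Finset (Fin m)) = _) (fun i _ => show
        (∏ j : Fin m, if (i, j).1 < (i, j).2 then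
            (X (Sum.inr i) - X (Sum.inr j) : MvPolynomial (Fin m ⊕ Fin m) F) else 1)
        = ∏ j ∈ Finset.Ioi i, (X (Sum.inr i) - X (Sum.inr j)) from by
      rw [← Finset.prod_filter]
      refine Finset.prod_congr ?_ fun jj _ => rfl
      ext jj; simp)]
    rw [Finset.prod_congr (rfl : (Finset.univ : Finset (Fin m)) = _) (fun i _ => show
        (∏ j ∈ Finset.Ioi i, (X (Sum.inr j) - X (Sum.inr i) : MvPolynomial (Fin m ⊕ Fin m) F))
        = (-1)^(m - 1 - (i:ℕ)) * ∏ j ∈ Finset.Ioi i, (X (Sum.inr i) - X (Sum.inr j)) from by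
      rw [Finset.prod_congr (rfl : Finset.Ioi i = _) (fun j _ => show
          (X (Sum.inr j) - X (Sum.inr i) : MvPolynomial (Fin m ⊕ Fin m) F)
            = (-1) * (X (Sum.inr i) - X (Sum.inr j)) from by ring),
        Finset.prod_mul_distrib, Finset.prod_const, Fin.card_Ioi])]
    rw [Finset.prod_mul_distrib, Finset.prod_pow_eq_pow_sum]
    congr 2
    rw [Fin.sum_univ_eq_sum_range (fun i => m - 1 - i) m,
      Finset.sum_range_reflect (fun i => i) m, Finset.sum_range_id,
      Nat.choose_two_right]
  rw [hLHS, hM2, Matrix.det_mul, Matrix.det_transpose,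
    det_fpoly_coeff (C t) m u u, Matrix.det_vandermonde, hPy, ← hPx]
  ring
end

section
/- If w is the minimal-length permutation such that w Lambda = Lambda*, then w(Lambda + (1^m)) = Lambda^{circledast}. -/
open Finset

/-- The Coxeter length of a permutation of `Fin N`, i.e. its number of inversions. -/
def permLength {N : ℕ} (w : Equiv.Perm (Fin N)) : ℕ :=
  ((Finset.univ : Finset (Fin N × Fin N)).filter
    (fun p => p.1 < p.2 ∧ w p.2 < w p.1)).card

/-!
A minimal-length sorting permutation `w` is stable. If two adjacent sorted positions `i ⋖ j`
carry equal values but `w⁻¹ j < w⁻¹ i`, then `swap i j * w` still sorts `Λ` and has exactly the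
inversions of `w` except `(w⁻¹ j, w⁻¹ i)`. Hence, within a block of equal values of `Λ*`, the
entries keep their order in `Λ`; as the entries of `Λ^a` are distinct, only the first entry of a
block can come from `Λ^a`, and adding `1` to it keeps the sequence decreasing.
-/

open Equiv

lemma lt_of_swap_apply_lt_swap_apply {α : Type*} [LinearOrder α] [DecidableEq α]
    {i j x y : α} (hij : i ⋖ j) (h : swap i j x < swap i j y) (hxy : ¬(x = j ∧ y = i)) :
    x < y := by
  have above : ∀ z, i < z → j ≤ z := fun z => hij.ge_of_gt
  have below : ∀ z, z < j → z ≤ i := fun z => hij.le_of_lt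
  have := hij.lt
  rw [swap_apply_def, swap_apply_def] at h
  split_ifs at h <;> grind

lemma permLength_swap_mul_lt {N : ℕ} (w : Perm (Fin N)) {i j : Fin N} (hij : i ⋖ j)
    (h : w⁻¹ j < w⁻¹ i) : permLength (swap i j * w) < permLength w := by
  unfold permLength
  refine Finset.card_lt_card (Finset.ssubset_iff_of_subset ?_ |>.2 ⟨(w⁻¹ j, w⁻¹ i), ?_, ?_⟩)
  · intro ⟨p, q⟩ hpq
    rw [mem_filter] at hpq ⊢
    simp only [mem_univ, true_and, Perm.mul_apply] at hpq ⊢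
    obtain ⟨hpq, hinv⟩ := hpq
    refine ⟨hpq, lt_of_swap_apply_lt_swap_apply hij hinv ?_⟩
    rintro ⟨rfl, rfl⟩
    exact lt_asymm hpq (by simpa using h)
  · simpa [hij.lt] using h
  · rw [mem_filter]
    simp [hij.lt.not_gt]

lemma antitone_swap_mul_of_eq {N : ℕ} {Λ : Fin N → ℕ} {w : Perm (Fin N)} {i j : Fin N}
    (hw : Antitone (fun k => Λ (w⁻¹ k))) (hij : Λ (w⁻¹ i) = Λ (w⁻¹ j)) :
    Antitone (fun k => Λ ((swap i j * w)⁻¹ k)) := by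
  have : (fun k => Λ ((swap i j * w)⁻¹ k)) = fun k => Λ (w⁻¹ k) := by
    funext k
    simp only [mul_inv_rev, swap_inv, Perm.mul_apply]
    rw [swap_apply_def]
    split_ifs <;> simp_all
  rwa [this]

lemma inv_lt_inv_of_covBy_of_minimal {N : ℕ} {Λ : Fin N → ℕ} {w : Perm (Fin N)}
    (hw : Antitone (fun k => Λ (w⁻¹ k)))
    (hmin : ∀ u : Perm (Fin N), Antitone (fun k => Λ (u⁻¹ k)) → permLength w ≤ permLength u)
    {i j : Fin N} (hij : i ⋖ j) (heq : Λ (w⁻¹ i) = Λ (w⁻¹ j)) : w⁻¹ i < w⁻¹ j := by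
  by_contra! hle
  have hlt : w⁻¹ j < w⁻¹ i := hle.lt_of_ne (w⁻¹.injective.ne hij.ne')
  exact (hmin _ (antitone_swap_mul_of_eq hw heq)).not_gt (permLength_swap_mul_lt w hij hlt)

/- `w` acts by `(w v)_i = v_{w⁻¹ i}`, and a rearrangement of a vector is its decreasing
rearrangement iff it is `Antitone`. -/
theorem minimal_sorting_perm_sorts_shifted_general (N m : ℕ) (Λ : Fin N → ℕ)
    (hΛa : ∀ i j : Fin N, (i : ℕ) < m → (j : ℕ) < m → i < j → Λ j < Λ i)
    (w : Equiv.Perm (Fin N))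
    (hw : Antitone (fun i => Λ (w⁻¹ i)))
    (hmin : ∀ u : Equiv.Perm (Fin N),
      Antitone (fun i => Λ (u⁻¹ i)) → permLength w ≤ permLength u) :
    Antitone (fun i => Λ (w⁻¹ i) + (if ((w⁻¹ i : Fin N) : ℕ) < m then 1 else 0)) := by
  refine (antitone_iff_forall_covBy _).2 fun i j hij => ?_
  have hle : Λ (w⁻¹ j) ≤ Λ (w⁻¹ i) := hw hij.le
  rcases hle.lt_or_eq with hlt | heq
  · split_ifs <;> omega
  · have hord := inv_lt_inv_of_covBy_of_minimal hw hmin hij heq.symm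
    have hj : ¬ ((w⁻¹ j : Fin N) : ℕ) < m := fun hj =>
      (hΛa _ _ (lt_trans hord hj) hj hord).ne heq
    simp only [hj, if_false, heq]
    omega

theorem minimal_sorting_perm_sorts_shifted (N m : ℕ) (hm : m ≤ N) (Λ : Fin N → ℕ)
    (hΛa : ∀ i j : Fin N, (i : ℕ) < m → (j : ℕ) < m → i < j → Λ j < Λ i)
    (hΛs : ∀ i j : Fin N, m ≤ (i : ℕ) → i ≤ j → Λ j ≤ Λ i)
    (w : Equiv.Perm (Fin N))
    (hw : Antitone (fun i => Λ (w⁻¹ i)))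
    (hmin : ∀ u : Equiv.Perm (Fin N),
      Antitone (fun i => Λ (u⁻¹ i)) → permLength w ≤ permLength u) :
    Antitone (fun i => Λ (w⁻¹ i) + (if ((w⁻¹ i : Fin N) : ℕ) < m then 1 else 0)) :=
  minimal_sorting_perm_sorts_shifted_general N m Λ hΛa w hw hmin
end

section
/- Let sigma and delta be two permutations such that both (Omega, w sigma) and (Omega, w delta) generate superevaluations for the same superpartition Omega and fixed w. Then sigma^{-1} delta lies in the Young subgroup S_m x S_{[m+1,N]}; equivalently, sigma and delta represent the same coset of S_N / (S_m x S_{[m+1,N]}). -/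
/-!
A decreasing rearrangement of a tuple is unique, so `(w * σ)⁻¹` and `(w * δ)⁻¹` rearrange both
`Ω` and `Ω + (1^m)` in the same way, hence also the indicator of `{0, …, m - 1}`; evaluating at
`(w * δ) i` shows that `σ⁻¹ δ` preserves that indicator.
-/

theorem Tuple.comp_eq_comp_of_antitone_of_antitone_add {α : Type*}
    [Add α] [PartialOrder α] [IsLeftCancelAdd α] {n : ℕ} {f g : Fin n → α}
    {σ τ : Equiv.Perm (Fin n)} (hfσ : Antitone (f ∘ σ)) (hfτ : Antitone (f ∘ τ))
    (hfgσ : Antitone ((f + g) ∘ σ)) (hfgτ : Antitone ((f + g) ∘ τ)) : g ∘ σ = g ∘ τ := by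
  funext i
  have hf := congrFun (Tuple.unique_antitone hfσ hfτ) i
  have hfg := congrFun (Tuple.unique_antitone hfgσ hfgτ) i
  simp only [Function.comp_apply, Pi.add_apply] at hf hfg ⊢
  rw [hf] at hfg
  exact add_left_cancel hfg

theorem superevaluation_coset_unique_general (N m : ℕ) (Ω : Fin N → ℕ)
    (w σ δ : Equiv.Perm (Fin N))
    (hσ1 : Antitone (fun i => Ω ((w * σ)⁻¹ i)))
    (hσ2 : Antitone (fun i =>
      Ω ((w * σ)⁻¹ i) + (if (((w * σ)⁻¹ i : Fin N) : ℕ) < m then 1 else 0)))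
    (hδ1 : Antitone (fun i => Ω ((w * δ)⁻¹ i)))
    (hδ2 : Antitone (fun i =>
      Ω ((w * δ)⁻¹ i) + (if (((w * δ)⁻¹ i : Fin N) : ℕ) < m then 1 else 0))) :
    ∀ i : Fin N, (i : ℕ) < m ↔ ((σ⁻¹ (δ i) : Fin N) : ℕ) < m := by
  intro i
  set χ : Fin N → ℕ := fun j => if (j : ℕ) < m then 1 else 0
  have hχ : χ (σ⁻¹ (δ i)) = χ i := by
    have h := congrFun
      (Tuple.comp_eq_comp_of_antitone_of_antitone_add (g := χ) hσ1 hδ1 hσ2 hδ2) ((w * δ) i)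
    simpa [mul_inv_rev] using h
  have hχ_eq_one (j : Fin N) : χ j = 1 ↔ (j : ℕ) < m := by
    by_cases hj : (j : ℕ) < m <;> simp [χ, hj]
  rw [← hχ_eq_one, ← hχ_eq_one, hχ]

theorem superevaluation_coset_unique (N m : ℕ) (hm : m ≤ N) (Ω : Fin N → ℕ)
    (hΩa : ∀ i j : Fin N, (i : ℕ) < m → (j : ℕ) < m → i < j → Ω j < Ω i)
    (hΩs : ∀ i j : Fin N, m ≤ (i : ℕ) → i ≤ j → Ω j ≤ Ω i)
    (w σ δ : Equiv.Perm (Fin N))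
    (hσ1 : Antitone (fun i => Ω ((w * σ)⁻¹ i)))
    (hσ2 : Antitone (fun i =>
      Ω ((w * σ)⁻¹ i) + (if (((w * σ)⁻¹ i : Fin N) : ℕ) < m then 1 else 0)))
    (hδ1 : Antitone (fun i => Ω ((w * δ)⁻¹ i)))
    (hδ2 : Antitone (fun i =>
      Ω ((w * δ)⁻¹ i) + (if (((w * δ)⁻¹ i : Fin N) : ℕ) < m then 1 else 0))) :
    ∀ i : Fin N, (i : ℕ) < m ↔ ((σ⁻¹ (δ i) : Fin N) : ℕ) < m :=
  superevaluation_coset_unique_general N m Ω w σ δ hσ1 hσ2 hδ1 hδ2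
end

section
/- Let Omega/Lambda be a vertical r-strip of superpartitions such that every row contains at most one marked change (no row is simultaneously a circle-square row and a new-circle row). Let tilde-sigma be a permutation interchanging the circle-square rows with the new-circle rows and fixing all other rows, and let tilde-J be the union of the circle-square rows and the plain-square rows. Then with sigma = w^{-1} tilde-sigma w and J = w^{-1} tilde-sigma(tilde-J), one has J subseteq [m+1, N]. -/
/-
Every row of `J̃` is sent by `σ̃` to a row of `Λ` without a circle. A circle-square row goes to a
new-circle row, which cannot carry a circle of `Λ`: it would then also be a circle-square row,
contrary to type I. A plain-square row has `Ω^⊛ ≤ Λ^⊛ + 1 = Λ* + 1 = Ω*`, so it is not a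
new-circle row and `σ̃` fixes it. Since the circled rows of `Λ` are exactly `w([m])`, `w⁻¹`
sends circle-free rows outside `[m]`.
-/

open Finset

section StripRows

variable {ι : Type*}

def IsCircleSquareRow (Λs Λc Ωs : ι → ℕ) (i : ι) : Prop :=
  Ωs i = Λs i + 1 ∧ Λc i = Λs i + 1

def IsNewCircleRow (Λs Λc Ωs Ωc : ι → ℕ) (i : ι) : Prop :=
  Ωc i = Ωs i + 1 ∧ ¬(Λc i = Λs i + 1 ∧ Ωs i = Λs i)

variable {Λs Λc Ωs Ωc : ι → ℕ} {i : ι}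

theorem IsNewCircleRow.not_circle (hs : Ωs i = Λs i ∨ Ωs i = Λs i + 1)
    (htypeI : ¬(IsCircleSquareRow Λs Λc Ωs i ∧ IsNewCircleRow Λs Λc Ωs Ωc i))
    (hnew : IsNewCircleRow Λs Λc Ωs Ωc i) : Λc i ≠ Λs i + 1 := by
  intro hcirc
  have hsq : Ωs i = Λs i + 1 := hs.resolve_left fun h => hnew.2 ⟨hcirc, h⟩
  exact htypeI ⟨⟨hsq, hcirc⟩, hnew⟩

theorem not_isNewCircleRow_of_square_of_not_circle (hΛ : Λc i = Λs i ∨ Λc i = Λs i + 1)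
    (hc : Ωc i = Λc i ∨ Ωc i = Λc i + 1) (hsq : Ωs i = Λs i + 1) (hcirc : Λc i ≠ Λs i + 1) :
    ¬IsNewCircleRow Λs Λc Ωs Ωc i := by
  rintro ⟨hnew, -⟩
  have := hΛ.resolve_right hcirc
  omega

theorem not_circle_apply_of_square (σ : ι → ι)
    (hΛ : ∀ i, Λc i = Λs i ∨ Λc i = Λs i + 1) (hs : ∀ i, Ωs i = Λs i ∨ Ωs i = Λs i + 1)
    (hc : ∀ i, Ωc i = Λc i ∨ Ωc i = Λc i + 1)
    (htypeI : ∀ i, ¬(IsCircleSquareRow Λs Λc Ωs i ∧ IsNewCircleRow Λs Λc Ωs Ωc i))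
    (hσ_circleSquare : ∀ i, IsCircleSquareRow Λs Λc Ωs i → IsNewCircleRow Λs Λc Ωs Ωc (σ i))
    (hσ_fix : ∀ i, ¬IsCircleSquareRow Λs Λc Ωs i → ¬IsNewCircleRow Λs Λc Ωs Ωc i → σ i = i)
    (hsq : Ωs i = Λs i + 1) : Λc (σ i) ≠ Λs (σ i) + 1 := by
  by_cases hcirc : Λc i = Λs i + 1
  · exact (hσ_circleSquare i ⟨hsq, hcirc⟩).not_circle (hs _) (htypeI _)
  · rw [hσ_fix i (fun h => hcirc h.2)
      (not_isNewCircleRow_of_square_of_not_circle (hΛ i) (hc i) hsq hcirc)]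
    exact hcirc

end StripRows

theorem le_inv_apply_of_filter_eq_image_lt {N m : ℕ} (w : Equiv.Perm (Fin N))
    (p : Fin N → Prop) [DecidablePred p]
    (hw : univ.filter p = (univ.filter fun j : Fin N => (j : ℕ) < m).image w)
    {x : Fin N} (hx : ¬p x) : m ≤ (w⁻¹ x : ℕ) := by
  by_contra! hlt
  have hmem : x ∈ (univ.filter fun j : Fin N => (j : ℕ) < m).image w :=
    mem_image.mpr ⟨w⁻¹ x, by simpa using hlt, by simp⟩
  rw [← hw] at hmem
  exact hx (mem_filter.mp hmem).2

theorem typeI_strip_J_in_upper_range_general (N m : ℕ)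
    (Λs Λc Ωs Ωc : Fin N → ℕ)
    (hΛ01 : ∀ i, Λc i = Λs i ∨ Λc i = Λs i + 1)
    (hs01 : ∀ i, Ωs i = Λs i ∨ Ωs i = Λs i + 1)
    (hc01 : ∀ i, Ωc i = Λc i ∨ Ωc i = Λc i + 1)
    (w σt : Equiv.Perm (Fin N))
    -- the circles of Λ sit exactly in the rows w([m]):
    (hw : (Finset.univ : Finset (Fin N)).filter (fun i => Λc i = Λs i + 1)
        = ((Finset.univ : Finset (Fin N)).filter (fun j : Fin N => (j : ℕ) < m)).image w)
    -- type I: no row is both a circle-square row and a new-circle row: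
    (htypeI : ∀ i, ¬((Ωs i = Λs i + 1 ∧ Λc i = Λs i + 1)
        ∧ (Ωc i = Ωs i + 1 ∧ ¬(Λc i = Λs i + 1 ∧ Ωs i = Λs i))))
    -- σ̃ interchanges the circle-square rows and the new-circle rows:
    (hσt1 : ((Finset.univ : Finset (Fin N)).filter
          (fun i => Ωs i = Λs i + 1 ∧ Λc i = Λs i + 1)).image σt
        = (Finset.univ : Finset (Fin N)).filter
            (fun i => Ωc i = Ωs i + 1 ∧ ¬(Λc i = Λs i + 1 ∧ Ωs i = Λs i)))
    -- and fixes all remaining rows: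
    (hσt3 : ∀ i : Fin N, ¬(Ωs i = Λs i + 1 ∧ Λc i = Λs i + 1) →
        ¬(Ωc i = Ωs i + 1 ∧ ¬(Λc i = Λs i + 1 ∧ Ωs i = Λs i)) → σt i = i) :
    -- conclusion: J = w⁻¹ σ̃ (J̃) ⊆ [m+1, N]
    ∀ j ∈ ((Finset.univ : Finset (Fin N)).filter (fun i => Ωs i = Λs i + 1)).image
        (fun i => w⁻¹ (σt i)),
      m ≤ (j : ℕ) := by
  have hσ_circleSquare (i : Fin N) (hi : IsCircleSquareRow Λs Λc Ωs i) :
      IsNewCircleRow Λs Λc Ωs Ωc (σt i) :=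
    (mem_filter.mp (hσt1.subset (mem_image_of_mem σt (mem_filter.mpr ⟨mem_univ i, hi⟩)))).2
  intro j hj
  obtain ⟨i, hi, rfl⟩ := mem_image.mp hj
  exact le_inv_apply_of_filter_eq_image_lt w _ hw <|
    not_circle_apply_of_square σt hΛ01 hs01 hc01 htypeI hσ_circleSquare hσt3 (mem_filter.mp hi).2

theorem typeI_strip_J_in_upper_range (N m r : ℕ) (hm : m ≤ N)
    (Λs Λc Ωs Ωc : Fin N → ℕ)
    (hΛsA : Antitone Λs) (hΛcA : Antitone Λc) (hΩsA : Antitone Ωs) (hΩcA : Antitone Ωc)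
    (hΛ01 : ∀ i, Λc i = Λs i ∨ Λc i = Λs i + 1)
    (hΛm : (∑ i, Λc i) = (∑ i, Λs i) + m)
    (hΩ01 : ∀ i, Ωc i = Ωs i ∨ Ωc i = Ωs i + 1)
    (hΩm : (∑ i, Ωc i) = (∑ i, Ωs i) + m)
    (hs01 : ∀ i, Ωs i = Λs i ∨ Ωs i = Λs i + 1)
    (hsr : (∑ i, Ωs i) = (∑ i, Λs i) + r)
    (hc01 : ∀ i, Ωc i = Λc i ∨ Ωc i = Λc i + 1)
    (hcr : (∑ i, Ωc i) = (∑ i, Λc i) + r)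
    (w σt : Equiv.Perm (Fin N))
    -- the circles of Λ sit exactly in the rows w([m]):
    (hw : (Finset.univ : Finset (Fin N)).filter (fun i => Λc i = Λs i + 1)
        = ((Finset.univ : Finset (Fin N)).filter (fun j : Fin N => (j : ℕ) < m)).image w)
    -- type I: no row is both a circle-square row and a new-circle row:
    (htypeI : ∀ i, ¬((Ωs i = Λs i + 1 ∧ Λc i = Λs i + 1)
        ∧ (Ωc i = Ωs i + 1 ∧ ¬(Λc i = Λs i + 1 ∧ Ωs i = Λs i))))
    -- σ̃ interchanges the circle-square rows and the new-circle rows: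
    (hσt1 : ((Finset.univ : Finset (Fin N)).filter
          (fun i => Ωs i = Λs i + 1 ∧ Λc i = Λs i + 1)).image σt
        = (Finset.univ : Finset (Fin N)).filter
            (fun i => Ωc i = Ωs i + 1 ∧ ¬(Λc i = Λs i + 1 ∧ Ωs i = Λs i)))
    (hσt2 : ((Finset.univ : Finset (Fin N)).filter
          (fun i => Ωc i = Ωs i + 1 ∧ ¬(Λc i = Λs i + 1 ∧ Ωs i = Λs i))).image σt
        = (Finset.univ : Finset (Fin N)).filter
            (fun i => Ωs i = Λs i + 1 ∧ Λc i = Λs i + 1))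
    -- and fixes all remaining rows:
    (hσt3 : ∀ i : Fin N, ¬(Ωs i = Λs i + 1 ∧ Λc i = Λs i + 1) →
        ¬(Ωc i = Ωs i + 1 ∧ ¬(Λc i = Λs i + 1 ∧ Ωs i = Λs i)) → σt i = i) :
    -- conclusion: J = w⁻¹ σ̃ (J̃) ⊆ [m+1, N]
    ∀ j ∈ ((Finset.univ : Finset (Fin N)).filter (fun i => Ωs i = Λs i + 1)).image
        (fun i => w⁻¹ (σt i)),
      m ≤ (j : ℕ) :=
  typeI_strip_J_in_upper_range_general N m Λs Λc Ωs Ωc hΛ01 hs01 hc01 w σt hw htypeI hσt1 hσt3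
end
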